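/- arXiv:1011.3498 — 8 statements merged into one kernel-verified Lean document; each statement's English description precedes it below -/
import Mathlib

section
/- Let α_{q,g} = -∑_{k=0}^{g-1} ln(1 - q^{k-g}). Then for every integer s ≥ g, the probability that s uniformly random vectors in GF(q)^g do not span GF(q)^g is at most 1 - exp(-α_{q,g} · q^{-(s-g)}), and hence at most α_{q,g} · q^{-(s-g)}. -/
open MeasureTheory Finset Real

/-!
A family `v : Fin s → F^g` spans `F^g` iff the `g` rows of the `g × s` matrix with columns `v`
are linearly independent in `F^s`, so there are `∏_{k<g} (q^s - q^k)` spanning families and the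
spanning probability is `∏_{k<g} (1 - q^(k-s))`. With `t = q^(-(s-g)) ∈ (0, 1]` we have
`q^(k-s) = t q^(k-g)`, and Bernoulli's inequality `(1 - y)^t ≤ 1 - t y` for exponents `t ≤ 1`
bounds this product below by `exp (t ∑_{k<g} log (1 - q^(k-g))) = exp (-α t)`.
The second bound is `1 - exp (-x) ≤ x`.
-/

theorem Matrix.span_range_col_eq_top_iff_linearIndependent_row {F ι κ : Type*} [Field F]
    [Fintype ι] [Fintype κ] (A : Matrix κ ι F) :
    Submodule.span F (Set.range A.col) = ⊤ ↔ LinearIndependent F A.row := by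
  rw [Submodule.eq_top_iff_finrank_eq, ← A.rank_eq_finrank_span_cols,
    linearIndependent_iff_card_eq_finrank_span, Set.finrank, ← A.rank_eq_finrank_span_row,
    Module.finrank_fintype_fun_eq_card, eq_comm]

theorem card_span_range_eq_top {F ι : Type*} [Field F] [Fintype F] [Fintype ι] {g : ℕ}
    (hg : g ≤ Fintype.card ι) :
    Nat.card {v : ι → Fin g → F // Submodule.span F (Set.range v) = ⊤} =
      ∏ i : Fin g, (Fintype.card F ^ Fintype.card ι - Fintype.card F ^ (i : ℕ)) := by
  let e : {v : ι → Fin g → F // Submodule.span F (Set.range v) = ⊤} ≃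
      {w : Fin g → ι → F // LinearIndependent F w} :=
    (Equiv.piComm fun _ _ => F).subtypeEquiv fun v =>
      (Matrix.of (Function.swap v)).span_range_col_eq_top_iff_linearIndependent_row
  rw [Nat.card_congr e, card_linearIndependent, Module.finrank_fintype_fun_eq_card]
  rwa [Module.finrank_fintype_fun_eq_card]

theorem prod_one_sub_zpow_eq_cast_prod_div {q n g : ℕ} (hq : 0 < q) (hg : g ≤ n) :
    ∏ k ∈ range g, (1 - (q : ℝ) ^ ((k : ℤ) - n)) =
      ((∏ i : Fin g, (q ^ n - q ^ (i : ℕ)) : ℕ) : ℝ) / ((q ^ g) ^ n : ℕ) := by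
  have hq' : (0 : ℝ) < q := by exact_mod_cast hq
  rw [prod_range, Nat.cast_prod, Nat.cast_pow, Nat.cast_pow, ← pow_mul, mul_comm, pow_mul,
    ← Fin.prod_const g ((q : ℝ) ^ n), ← prod_div_distrib]
  refine prod_congr rfl fun i _ => ?_
  rw [Nat.cast_sub (Nat.pow_le_pow_right hq (by omega)), Nat.cast_pow, Nat.cast_pow, sub_div,
    div_self (by positivity), zpow_sub₀ hq'.ne', zpow_natCast, zpow_natCast]

theorem toMeasure_uniformOfFintype_span_range_eq_top {F ι : Type*} [Field F] [Fintype F]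
    [Fintype ι] [DecidableEq ι] {g : ℕ} (hg : g ≤ Fintype.card ι) :
    @PMF.toMeasure (ι → Fin g → F) ⊤ (PMF.uniformOfFintype (ι → Fin g → F))
        {v | Submodule.span F (Set.range v) = ⊤} =
      ENNReal.ofReal
        (∏ k ∈ range g, (1 - (Fintype.card F : ℝ) ^ ((k : ℤ) - Fintype.card ι))) := by
  let _ : MeasurableSpace (ι → Fin g → F) := ⊤
  rw [PMF.toMeasure_uniformOfFintype_apply _ MeasurableSpace.measurableSet_top,
    ← Nat.card_eq_fintype_card, Set.coe_ofPred, card_span_range_eq_top hg, Fintype.card_fun,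
    Fintype.card_fun, Fintype.card_fin, prod_one_sub_zpow_eq_cast_prod_div Fintype.card_pos hg,
    ENNReal.ofReal_div_of_pos (by simp [Fintype.card_pos]), ENNReal.ofReal_natCast,
    ENNReal.ofReal_natCast]

theorem toMeasure_uniformOfFintype_span_range_ne_top {F ι : Type*} [Field F] [Fintype F]
    [Fintype ι] [DecidableEq ι] {g : ℕ} (hg : g ≤ Fintype.card ι) :
    @PMF.toMeasure (ι → Fin g → F) ⊤ (PMF.uniformOfFintype (ι → Fin g → F))
        {v | Submodule.span F (Set.range v) ≠ ⊤} =
      ENNReal.ofReal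
        (1 - ∏ k ∈ range g, (1 - (Fintype.card F : ℝ) ^ ((k : ℤ) - Fintype.card ι))) := by
  let _ : MeasurableSpace (ι → Fin g → F) := ⊤
  have hprod_nonneg :
      0 ≤ ∏ k ∈ range g, (1 - (Fintype.card F : ℝ) ^ ((k : ℤ) - Fintype.card ι)) := by
    rw [prod_one_sub_zpow_eq_cast_prod_div Fintype.card_pos hg]
    positivity
  rw [← Set.compl_ofPred, prob_compl_eq_one_sub MeasurableSpace.measurableSet_top,
    toMeasure_uniformOfFintype_span_range_eq_top hg, ← ENNReal.ofReal_one,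
    ← ENNReal.ofReal_sub _ hprod_nonneg]

theorem exp_mul_sum_log_one_sub_le_prod {ι : Type*} (S : Finset ι) (y : ι → ℝ)
    (hy : ∀ i ∈ S, y i < 1) {t : ℝ} (ht0 : 0 ≤ t) (ht1 : t ≤ 1) :
    exp (t * ∑ i ∈ S, log (1 - y i)) ≤ ∏ i ∈ S, (1 - t * y i) := by
  calc exp (t * ∑ i ∈ S, log (1 - y i)) = ∏ i ∈ S, (1 - y i) ^ t := by
        rw [mul_sum, exp_sum]
        refine prod_congr rfl fun i hi => ?_
        rw [rpow_def_of_pos (sub_pos.2 (hy i hi)), mul_comm]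
    _ ≤ ∏ i ∈ S, (1 - t * y i) := by
        refine prod_le_prod (fun i hi => rpow_nonneg (sub_pos.2 (hy i hi)).le _) fun i hi => ?_
        simpa [sub_eq_add_neg] using
          rpow_one_add_le_one_add_mul_self (neg_le_neg (hy i hi).le) ht0 ht1

theorem stmt3_general
    (q g s : ℕ) (hq2 : 2 ≤ q) (hs : g ≤ s)
    (F : Type*) [Field F] [Fintype F] (hq : Fintype.card F = q)
    (α : ℝ) (hα : α = -∑ k ∈ Finset.range g, Real.log (1 - (q : ℝ) ^ ((k : ℤ) - (g : ℤ)))) :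
    @PMF.toMeasure (Fin s → (Fin g → F)) ⊤ (PMF.uniformOfFintype (Fin s → (Fin g → F)))
        {v : Fin s → (Fin g → F) | Submodule.span F (Set.range v) ≠ ⊤}
      ≤ ENNReal.ofReal (1 - Real.exp (-(α * (q : ℝ) ^ (-((s : ℤ) - (g : ℤ)))))) ∧
    @PMF.toMeasure (Fin s → (Fin g → F)) ⊤ (PMF.uniformOfFintype (Fin s → (Fin g → F)))
        {v : Fin s → (Fin g → F) | Submodule.span F (Set.range v) ≠ ⊤}
      ≤ ENNReal.ofReal (α * (q : ℝ) ^ (-((s : ℤ) - (g : ℤ)))) := by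
  have hq1 : (1 : ℝ) < q := by exact_mod_cast hq2
  set t : ℝ := (q : ℝ) ^ (-((s : ℤ) - (g : ℤ)))
  have ht0 : 0 ≤ t := by positivity
  have ht1 : t ≤ 1 := zpow_le_one_of_nonpos₀ hq1.le (by omega)
  have hprob := toMeasure_uniformOfFintype_span_range_ne_top (F := F) (ι := Fin s) (g := g)
    (by rwa [Fintype.card_fin])
  rw [hq, Fintype.card_fin] at hprob
  have hexp : exp (-(α * t)) ≤ ∏ k ∈ range g, (1 - (q : ℝ) ^ ((k : ℤ) - s)) :=
    calc exp (-(α * t)) = exp (t * ∑ k ∈ range g, log (1 - (q : ℝ) ^ ((k : ℤ) - g))) := by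
          rw [hα, neg_mul, neg_neg, mul_comm]
      _ ≤ ∏ k ∈ range g, (1 - t * (q : ℝ) ^ ((k : ℤ) - g)) :=
          exp_mul_sum_log_one_sub_le_prod _ _ (fun k hk =>
            zpow_lt_one_of_neg₀ hq1 (sub_neg.2 (by exact_mod_cast mem_range.1 hk))) ht0 ht1
      _ = ∏ k ∈ range g, (1 - (q : ℝ) ^ ((k : ℤ) - s)) := by
          refine prod_congr rfl fun k _ => ?_
          rw [← zpow_add₀ (by positivity)]
          congr 2
          ring
  have hexp_bound : 1 - exp (-(α * t)) ≤ α * t := by linarith [add_one_le_exp (-(α * t))]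
  rw [hprob]
  exact ⟨ENNReal.ofReal_le_ofReal (by linarith), ENNReal.ofReal_le_ofReal (by linarith)⟩

/-- With `α_{q,g} = -∑_{k=0}^{g-1} ln(1 - q^{k-g})`, for every `s ≥ g`
the probability that `s` uniformly random vectors in `GF(q)^g` do not span `GF(q)^g`
is at most `1 - exp(-α_{q,g} q^{-(s-g)})`, hence at most `α_{q,g} q^{-(s-g)}`. -/
theorem stmt3
    (q g s : ℕ) (hq2 : 2 ≤ q) (hg : 1 ≤ g) (hs : g ≤ s)
    (F : Type*) [Field F] [Fintype F] [DecidableEq F] (hq : Fintype.card F = q)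
    (α : ℝ) (hα : α = -∑ k ∈ Finset.range g, Real.log (1 - (q : ℝ) ^ ((k : ℤ) - (g : ℤ)))) :
    @PMF.toMeasure (Fin s → (Fin g → F)) ⊤ (PMF.uniformOfFintype (Fin s → (Fin g → F)))
        {v : Fin s → (Fin g → F) | Submodule.span F (Set.range v) ≠ ⊤}
      ≤ ENNReal.ofReal (1 - Real.exp (-(α * (q : ℝ) ^ (-((s : ℤ) - (g : ℤ)))))) ∧
    @PMF.toMeasure (Fin s → (Fin g → F)) ⊤ (PMF.uniformOfFintype (Fin s → (Fin g → F)))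
        {v : Fin s → (Fin g → F) | Submodule.span F (Set.range v) ≠ ⊤}
      ≤ ENNReal.ofReal (α * (q : ℝ) ^ (-((s : ℤ) - (g : ℤ)))) :=
  stmt3_general q g s hq2 hs F hq α hα
end

section
/- Let T be the number of i.i.d. samples from a distribution on {1,…,n} with probabilities ρ_1,…,ρ_n until, for every i, at least m_i copies of item i have been drawn. Then the tail-probability generating function φ_T(z) = ∑_{i≥0} Prob[T > i] z^i satisfies φ_T(z) = ∫_0^∞ { e^{-x(1-z)} - ∏_{i=1}^n [ e^{-ρ_i x(1-z)} - S_{m_i}(ρ_i x z) e^{-ρ_i x} ] } dx for 0 ≤ z ≤ 1, where S_m(x) = ∑_{j=0}^{m-1} x^j/j! (with S_0 = 0). -/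
/-!
Poissonization. After `t` draws the vector of letter counts is multinomial, so the
exponential generating function `∑ₜ P[all counts ≥ m after t draws] yᵗ/t!` factors as
`∏ᵢ (e^{ρᵢ y} - S_{mᵢ}(ρᵢ y))`. Since `P[T > t] = 1 - P[all counts ≥ m after t draws]`
(the collection is completed almost surely), the exponential generating function of the
tail probabilities is `e^y - ∏ᵢ (e^{ρᵢ y} - S_{mᵢ}(ρᵢ y))`, and the Borel transform
`∫₀^∞ e^{-x} (·)(xz) dx`, which sends `yᵗ/t!` to `zᵗ`, turns it into the ordinary generating
function; with `∑ ρᵢ = 1` its integrand is the one in the statement. Everything is done in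
`ℝ≥0∞`, where all series converge and can be rearranged freely.
-/

open MeasureTheory ProbabilityTheory Finset Real

/-- Truncated exponential series `S_m(x) = ∑_{j=0}^{m-1} x^j/j!` (so `S_0 = 0`). -/
noncomputable def truncExp (m : ℕ) (x : ℝ) : ℝ := ∑ j ∈ Finset.range m, x ^ j / (j.factorial : ℝ)

open scoped ENNReal Nat

@[fun_prop]
lemma continuous_truncExp (m : ℕ) : Continuous (truncExp m) := by
  unfold truncExp; fun_prop

lemma truncExp_nonneg (m : ℕ) {a : ℝ} (ha : 0 ≤ a) : 0 ≤ truncExp m a :=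
  sum_nonneg fun j _ => by positivity

lemma truncExp_le_exp (m : ℕ) {a : ℝ} (ha : 0 ≤ a) : truncExp m a ≤ exp a :=
  Real.sum_le_exp_of_nonneg ha m

lemma ENNReal.ofReal_exp_eq_tsum (a : ℝ) (ha : 0 ≤ a) :
    ENNReal.ofReal (exp a) = ∑' k, ENNReal.ofReal (a ^ k / k !) := by
  rw [exp_eq_exp_ℝ, ← (NormedSpace.expSeries_div_hasSum_exp a).tsum_eq,
    ENNReal.ofReal_tsum_of_nonneg (fun k => by positivity) (Real.summable_pow_div_factorial a)]

lemma ENNReal.ofReal_exp_sub_truncExp (m : ℕ) {a : ℝ} (ha : 0 ≤ a) :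
    ENNReal.ofReal (exp a - truncExp m a)
      = ∑' k, if m ≤ k then ENNReal.ofReal (a ^ k / k !) else 0 := by
  have hterm : ∀ k, 0 ≤ a ^ k / k ! := fun k => by positivity
  have hsplit : ∀ k, ENNReal.ofReal (a ^ k / k !)
      = (range m : Set ℕ).indicator (fun k => ENNReal.ofReal (a ^ k / k !)) k
        + if m ≤ k then ENNReal.ofReal (a ^ k / k !) else 0 := by
    intro k
    by_cases hk : m ≤ k <;> simp [hk, not_le.mp]
  rw [truncExp, ENNReal.ofReal_sub _ (sum_nonneg fun k _ => hterm k),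
    ENNReal.ofReal_exp_eq_tsum a ha, tsum_congr hsplit, ENNReal.tsum_add, ← sum_eq_tsum_indicator,
    ENNReal.ofReal_sum_of_nonneg fun k _ => hterm k, ENNReal.add_sub_cancel_left]
  exact ne_of_lt (sum_lt_top.mpr fun _ _ => ENNReal.ofReal_lt_top)

lemma ENNReal.prod_tsum_eq_tsum_pi {β : Type*} :
    ∀ {N : ℕ} (g : Fin N → β → ℝ≥0∞),
      ∏ i, ∑' b, g i b = ∑' b : Fin N → β, ∏ i, g i (b i)
  | 0, g => by simp
  | N + 1, g => by
    rw [Fin.prod_univ_succ, ENNReal.prod_tsum_eq_tsum_pi (fun i => g i.succ),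
      ← (Fin.consEquiv fun _ => β).tsum_eq, ENNReal.tsum_prod', ← ENNReal.tsum_mul_right]
    refine tsum_congr fun b => ?_
    rw [← ENNReal.tsum_mul_left]
    refine tsum_congr fun c => ?_
    simp [Fin.prod_univ_succ]

lemma ENNReal.tsum_eq_tsum_sum_piAntidiag {ι : Type*} [Fintype ι] [DecidableEq ι]
    (g : (ι → ℕ) → ℝ≥0∞) : ∑' k, g k = ∑' t, ∑ k ∈ piAntidiag univ t, g k := by
  rw [← (Equiv.sigmaFiberEquiv fun k : ι → ℕ => ∑ i, k i).tsum_eq, ENNReal.tsum_sigma']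
  refine tsum_congr fun t => ?_
  rw [← Finset.tsum_subtype]
  exact tsum_congr_set_coe g (by ext k; simp; rfl)

lemma multinomial_mul_prod_pow_mul_pow_div_factorial {ι : Type*} [Fintype ι] (k : ι → ℕ)
    (a : ι → ℝ) (y : ℝ) :
    Nat.multinomial univ k * (∏ i, a i ^ k i) * (y ^ (∑ i, k i) / (∑ i, k i)!)
      = ∏ i, (a i * y) ^ k i / (k i)! := by
  have hspec : (∏ i, ((k i)! : ℝ)) * Nat.multinomial univ k = (∑ i, k i)! := by
    exact_mod_cast Nat.multinomial_spec univ k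
  have hfac : ∀ i, ((k i)! : ℝ) ≠ 0 := fun i => by positivity
  have hmul : (Nat.multinomial univ k : ℝ) ≠ 0 := by
    exact_mod_cast (Nat.multinomial_pos univ k).ne'
  rw [prod_div_distrib]
  simp only [mul_pow, prod_mul_distrib, prod_pow_eq_pow_sum]
  rw [← hspec]
  field_simp

section Words

variable {ι : Type*} [DecidableEq ι]

def letterCount {t : ℕ} (f : Fin t → ι) (i : ι) : ℕ := #{u | f u = i}

lemma letterCount_eq_count (x : ℕ → ι) (t : ℕ) (i : ι) :
    letterCount (fun u : Fin t => x u) i = Nat.count (fun u => x u = i) t := by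
  rw [letterCount, Nat.count_eq_card_filter_range, card_filter, card_filter,
    Fin.sum_univ_eq_sum_range (fun u => if x u = i then 1 else 0)]

variable [Fintype ι]

noncomputable def completionProb (p : ι → ℝ≥0∞) (m : ι → ℕ) (t : ℕ) : ℝ≥0∞ :=
  ∑ f : Fin t → ι with ∀ i, m i ≤ letterCount f i, ∏ u, p (f u)

lemma completionProb_le_one {p : ι → ℝ≥0∞} (hp : ∑ i, p i = 1) (m : ι → ℕ) (t : ℕ) :
    completionProb p m t ≤ 1 :=
  calc completionProb p m t ≤ ∑ f : Fin t → ι, ∏ u, p (f u) :=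
        sum_le_sum_of_subset (filter_subset _ _)
    _ = 1 := by rw [← Fintype.sum_pow, hp, one_pow]

lemma sum_letterCount_mul_prod_eq {R : Type*} [CommSemiring R] (ρ : ι → R)
    (G : (ι → ℕ) → R) (t : ℕ) :
    ∑ f : Fin t → ι, G (letterCount f) * ∏ u, ρ (f u)
      = ∑ k ∈ piAntidiag univ t, G k * (Nat.multinomial univ k * ∏ i, ρ i ^ k i) := by
  -- Expand `(∑ i, ρ i Xⁱ)ᵗ` in the monoid algebra of count vectors in two ways,
  -- then read off coefficients against `G`.
  let x : ι → AddMonoidAlgebra R (ι → ℕ) :=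
    fun i => AddMonoidAlgebra.single (Pi.single i 1) (ρ i)
  let Φ : AddMonoidAlgebra R (ι → ℕ) →+ R :=
    (Finsupp.liftAddHom fun k => AddMonoidHom.mulLeft (G k)).comp
      AddMonoidAlgebra.coeffAddEquiv.toAddMonoidHom
  have hΦ : ∀ k r, Φ (AddMonoidAlgebra.single k r) = G k * r := by
    intro k r
    simp [Φ, AddMonoidAlgebra.coeffAddEquiv]
  have hwords : (∑ i, x i) ^ t
      = ∑ f : Fin t → ι, AddMonoidAlgebra.single (letterCount f) (∏ u, ρ (f u)) := by
    rw [← Fin.prod_const, Finset.prod_univ_sum, Fintype.piFinset_univ]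
    refine Finset.sum_congr rfl fun f _ => ?_
    rw [AddMonoidAlgebra.prod_single]
    congr 1
    ext i
    simp only [letterCount, Finset.sum_apply, Pi.single_apply]
    rw [Finset.card_filter]
    simp only [eq_comm]
  have hcounts : (∑ i, x i) ^ t = ∑ k ∈ piAntidiag univ t,
      AddMonoidAlgebra.single k (Nat.multinomial univ k * ∏ i, ρ i ^ k i) := by
    rw [Finset.sum_pow_eq_sum_piAntidiag]
    refine Finset.sum_congr rfl fun k _ => ?_
    simp only [x, AddMonoidAlgebra.single_pow, AddMonoidAlgebra.prod_single,
      AddMonoidAlgebra.natCast_def, AddMonoidAlgebra.single_mul_single, zero_add]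
    congr 1
    ext i
    simp [Finset.sum_apply, Pi.single_apply]
  simpa only [map_sum, hΦ] using congrArg Φ (hwords.symm.trans hcounts)

lemma completionProb_mul_ofReal_pow_div_factorial {ρ : ι → ℝ} (hρ : ∀ i, 0 ≤ ρ i)
    (m : ι → ℕ) {y : ℝ} (hy : 0 ≤ y) (t : ℕ) :
    completionProb (fun i => ENNReal.ofReal (ρ i)) m t * ENNReal.ofReal (y ^ t / t !)
      = ∑ k ∈ piAntidiag univ t,
          ∏ i, if m i ≤ k i then ENNReal.ofReal ((ρ i * y) ^ k i / (k i)!) else 0 := by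
  have hfilter : completionProb (fun i => ENNReal.ofReal (ρ i)) m t
      = ∑ f : Fin t → ι, (if ∀ i, m i ≤ letterCount f i then 1 else 0)
          * ∏ u, ENNReal.ofReal (ρ (f u)) := by
    simp only [completionProb, sum_filter, ite_mul, one_mul, zero_mul]
  have hmult := sum_letterCount_mul_prod_eq (fun i => ENNReal.ofReal (ρ i))
    (fun k => if ∀ i, m i ≤ k i then 1 else 0) t
  beta_reduce at hmult
  rw [hfilter, hmult, sum_mul]
  refine sum_congr rfl fun k hk => ?_
  obtain ⟨rfl, -⟩ := mem_piAntidiag.mp hk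
  rw [Fintype.prod_ite_zero]
  split_ifs
  · have hρy : ∀ i, 0 ≤ ρ i * y := fun i => mul_nonneg (hρ i) hy
    rw [one_mul, ← ENNReal.ofReal_prod_of_nonneg fun i _ => by have := hρy i; positivity,
      ← multinomial_mul_prod_pow_mul_pow_div_factorial,
      ENNReal.ofReal_mul
        (mul_nonneg (Nat.cast_nonneg _) (prod_nonneg fun i _ => pow_nonneg (hρ i) _)),
      ENNReal.ofReal_mul (Nat.cast_nonneg _), ENNReal.ofReal_natCast,
      ENNReal.ofReal_prod_of_nonneg fun i _ => pow_nonneg (hρ i) _]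
    simp only [ENNReal.ofReal_pow (hρ _)]
  · rw [zero_mul, zero_mul]

end Words

section Series

variable {n : ℕ} {ρ : Fin n → ℝ}

lemma prod_ofReal_exp_sub_truncExp (hρ : ∀ i, 0 ≤ ρ i) (m : Fin n → ℕ) {y : ℝ}
    (hy : 0 ≤ y) :
    ∏ i, ENNReal.ofReal (exp (ρ i * y) - truncExp (m i) (ρ i * y))
      = ∑' t, completionProb (fun i => ENNReal.ofReal (ρ i)) m t
          * ENNReal.ofReal (y ^ t / t !) := by
  simp_rw [ENNReal.ofReal_exp_sub_truncExp (m _) (mul_nonneg (hρ _) hy)]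
  rw [ENNReal.prod_tsum_eq_tsum_pi, ENNReal.tsum_eq_tsum_sum_piAntidiag]
  simp_rw [completionProb_mul_ofReal_pow_div_factorial hρ m hy]

lemma ofReal_exp_sub_prod_exp_sub_truncExp (hρ : ∀ i, 0 ≤ ρ i)
    (hp : ∑ i, ENNReal.ofReal (ρ i) = 1) (m : Fin n → ℕ) {y : ℝ} (hy : 0 ≤ y) :
    ENNReal.ofReal (exp y - ∏ i, (exp (ρ i * y) - truncExp (m i) (ρ i * y)))
      = ∑' t, (1 - completionProb (fun i => ENNReal.ofReal (ρ i)) m t)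
          * ENNReal.ofReal (y ^ t / t !) := by
  set q := completionProb (fun i => ENNReal.ofReal (ρ i)) m
  have hfactor : ∀ i, 0 ≤ exp (ρ i * y) - truncExp (m i) (ρ i * y) :=
    fun i => sub_nonneg.mpr (truncExp_le_exp _ (mul_nonneg (hρ i) hy))
  have hsplit : ∀ t, ENNReal.ofReal (y ^ t / t !)
      = q t * ENNReal.ofReal (y ^ t / t !) + (1 - q t) * ENNReal.ofReal (y ^ t / t !) :=
    fun t => by rw [← add_mul, add_tsub_cancel_of_le (completionProb_le_one hp m t), one_mul]
  have hfinite : ∑' t, q t * ENNReal.ofReal (y ^ t / t !) ≠ ∞ :=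
    prod_ofReal_exp_sub_truncExp hρ m hy ▸ ENNReal.prod_ne_top fun i _ => ENNReal.ofReal_ne_top
  rw [ENNReal.ofReal_sub _ (prod_nonneg fun i _ => hfactor i), ENNReal.ofReal_exp_eq_tsum y hy,
    tsum_congr hsplit, ENNReal.tsum_add, ENNReal.ofReal_prod_of_nonneg fun i _ => hfactor i,
    prod_ofReal_exp_sub_truncExp hρ m hy, ENNReal.add_sub_cancel_left hfinite]

lemma prod_exp_sub_truncExp_le_exp (hρ : ∀ i, 0 ≤ ρ i) (hρsum : ∑ i, ρ i = 1)
    (m : Fin n → ℕ) {y : ℝ} (hy : 0 ≤ y) :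
    ∏ i, (exp (ρ i * y) - truncExp (m i) (ρ i * y)) ≤ exp y :=
  calc ∏ i, (exp (ρ i * y) - truncExp (m i) (ρ i * y)) ≤ ∏ i, exp (ρ i * y) :=
        prod_le_prod (fun i _ => sub_nonneg.mpr (truncExp_le_exp _ (mul_nonneg (hρ i) hy)))
          fun i _ => sub_le_self _ (truncExp_nonneg _ (mul_nonneg (hρ i) hy))
    _ = exp y := by rw [← exp_sum, ← sum_mul, hρsum, one_mul]

lemma exp_sub_prod_eq_exp_neg_mul (hρsum : ∑ i, ρ i = 1) (m : Fin n → ℕ) (x z : ℝ) :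
    exp (-(x * (1 - z)))
        - ∏ i, (exp (-(ρ i * x * (1 - z))) - truncExp (m i) (ρ i * x * z) * exp (-(ρ i * x)))
      = exp (-x)
          * (exp (x * z) - ∏ i, (exp (ρ i * (x * z)) - truncExp (m i) (ρ i * (x * z)))) := by
  have hfactor : ∀ i,
      exp (-(ρ i * x * (1 - z))) - truncExp (m i) (ρ i * x * z) * exp (-(ρ i * x))
        = exp (-(ρ i * x)) * (exp (ρ i * (x * z)) - truncExp (m i) (ρ i * (x * z))) := fun i => by
    rw [show -(ρ i * x * (1 - z)) = -(ρ i * x) + ρ i * (x * z) by ring, exp_add, ← mul_assoc]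
    ring
  have hsum : ∑ i, -(ρ i * x) = -x := by rw [sum_neg_distrib, ← sum_mul, hρsum, one_mul]
  rw [prod_congr rfl fun i _ => hfactor i, prod_mul_distrib, ← exp_sum, hsum,
    show -(x * (1 - z)) = -x + x * z by ring, exp_add]
  ring

end Series

lemma Nat.exists_forall_ge_not_of_count_lt {p : ℕ → Prop} [DecidablePred p] {M : ℕ}
    (h : ∀ s, Nat.count p s < M) : ∃ N, ∀ u ≥ N, ¬ p u := by
  by_contra! hfreq
  have hinf : {u | p u}.Infinite :=
    Nat.frequently_atTop_iff_infinite.mp (Filter.frequently_atTop.mpr hfreq)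
  exact (h (Nat.nth p M)).ne (Nat.count_nth_of_infinite hinf M)

section Sampling

variable {Ω κ ι : Type*} [MeasurableSpace Ω] {μ : Measure Ω} [IsProbabilityMeasure μ]

-- The samples are not assumed measurable, so the events below may be non-measurable and `μ`
-- is only subadditive on them; a cover of total mass one still makes it additive.
lemma measure_biUnion_finset_eq_sum_of_sum_eq_one [Fintype ι] {E : ι → Set Ω}
    (hcover : ∀ ω, ∃ i, ω ∈ E i) (hsum : ∑ i, μ (E i) = 1) (s : Finset ι) :
    μ (⋃ i ∈ s, E i) = ∑ i ∈ s, μ (E i) := by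
  classical
  refine le_antisymm (measure_biUnion_finset_le s E) ?_
  have hfin : ∑ i ∈ sᶜ, μ (E i) ≠ ∞ :=
    ne_top_of_le_ne_top ENNReal.one_ne_top (hsum ▸ sum_le_sum_of_subset (subset_univ _))
  refine (ENNReal.add_le_add_iff_right hfin).mp ?_
  calc ∑ i ∈ s, μ (E i) + ∑ i ∈ sᶜ, μ (E i)
      = μ Set.univ := by rw [sum_add_sum_compl, hsum, measure_univ]
    _ ≤ μ ((⋃ i ∈ s, E i) ∪ ⋃ i ∈ sᶜ, E i) := measure_mono fun ω _ => by
      obtain ⟨i, hi⟩ := hcover ω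
      by_cases his : i ∈ s
      · exact Or.inl (Set.mem_biUnion his hi)
      · exact Or.inr (Set.mem_biUnion (mem_compl.mpr his) hi)
    _ ≤ μ (⋃ i ∈ s, E i) + μ (⋃ i ∈ sᶜ, E i) := measure_union_le _ _
    _ ≤ μ (⋃ i ∈ s, E i) + ∑ i ∈ sᶜ, μ (E i) := by
      gcongr; exact measure_biUnion_finset_le _ _

variable [Fintype ι] {p : ι → ℝ≥0∞} {Y : κ → Ω → ι}

lemma measure_preimage_finset_eq_sum (hp : ∑ i, p i = 1)
    (hlaw : ∀ u i, μ {ω | Y u ω = i} = p i) (u : κ) (C : Finset ι) :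
    μ (Y u ⁻¹' C) = ∑ i ∈ C, p i := by
  have hset : Y u ⁻¹' C = ⋃ i ∈ C, {ω | Y u ω = i} := by ext; simp
  rw [hset, measure_biUnion_finset_eq_sum_of_sum_eq_one (fun ω => ⟨Y u ω, rfl⟩)
    (by simp [hlaw, hp])]
  simp [hlaw]

lemma measure_forall_mem_eq_prod (hp : ∑ i, p i = 1)
    (hY : iIndepFun (m := fun _ => (⊤ : MeasurableSpace ι)) Y μ)
    (hlaw : ∀ u i, μ {ω | Y u ω = i} = p i) (s : Finset κ) (C : κ → Finset ι) :
    μ {ω | ∀ u ∈ s, Y u ω ∈ C u} = ∏ u ∈ s, ∑ i ∈ C u, p i := by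
  have hset : {ω | ∀ u ∈ s, Y u ω ∈ C u} = ⋂ u ∈ s, Y u ⁻¹' C u := by ext; simp
  rw [hset, hY.measure_inter_preimage_eq_mul s fun _ _ => MeasurableSpace.measurableSet_top]
  exact prod_congr rfl fun u _ => measure_preimage_finset_eq_sum hp hlaw u (C u)

lemma measure_sample_path_eq_sum [Fintype κ] [DecidableEq κ] (hp : ∑ i, p i = 1)
    (hY : iIndepFun (m := fun _ => (⊤ : MeasurableSpace ι)) Y μ)
    (hlaw : ∀ u i, μ {ω | Y u ω = i} = p i) (P : (κ → ι) → Prop) [DecidablePred P] :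
    μ {ω | P fun u => Y u ω} = ∑ f : κ → ι with P f, ∏ u, p (f u) := by
  let E : (κ → ι) → Set Ω := fun f => {ω | ∀ u, Y u ω = f u}
  have hE : ∀ f, μ (E f) = ∏ u, p (f u) := fun f => by
    simpa [E] using measure_forall_mem_eq_prod hp hY hlaw univ fun u => {f u}
  have hset : {ω | P fun u => Y u ω} = ⋃ f ∈ univ.filter P, E f := by
    ext ω
    simp only [Set.mem_ofPred_eq, Set.mem_iUnion, mem_filter, mem_univ, true_and, E, exists_prop]
    exact ⟨fun h => ⟨_, h, fun _ => rfl⟩, fun ⟨f, hf, hω⟩ => funext hω ▸ hf⟩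
  have hsum : ∑ f, μ (E f) = 1 := by
    simp only [hE, ← Fintype.prod_sum, hp, prod_const_one]
  rw [hset, measure_biUnion_finset_eq_sum_of_sum_eq_one (E := E)
    (fun ω => ⟨fun u => Y u ω, fun _ => rfl⟩) hsum]
  simp only [hE]

lemma measure_forall_ge_ne_eq_zero {Y : ℕ → Ω → ι} (hp : ∑ i, p i = 1)
    (hY : iIndepFun (m := fun _ => (⊤ : MeasurableSpace ι)) Y μ)
    (hlaw : ∀ u i, μ {ω | Y u ω = i} = p i) {i : ι} (hi : p i ≠ 0) (N : ℕ) :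
    μ {ω | ∀ u ≥ N, Y u ω ≠ i} = 0 := by
  classical
  have hmiss : ∑ j ∈ univ.erase i, p j = 1 - p i := by
    rw [← hp, ← add_sum_erase univ p (mem_univ i), ENNReal.add_sub_cancel_left]
    exact ne_top_of_le_ne_top ENNReal.one_ne_top (hp ▸ single_le_sum (by simp) (mem_univ i))
  have hbound : ∀ L, μ {ω | ∀ u ≥ N, Y u ω ≠ i} ≤ (1 - p i) ^ L := fun L => by
    calc μ {ω | ∀ u ≥ N, Y u ω ≠ i}
        ≤ μ {ω | ∀ u ∈ Ico N (N + L), Y u ω ∈ univ.erase i} :=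
          measure_mono fun ω hω u hu => by simpa using hω u (mem_Ico.mp hu).1
      _ = ∏ u ∈ Ico N (N + L), ∑ j ∈ univ.erase i, p j :=
          measure_forall_mem_eq_prod hp hY hlaw _ fun _ => univ.erase i
      _ = (1 - p i) ^ L := by rw [prod_const, Nat.card_Ico, Nat.add_sub_cancel_left, hmiss]
  have hlim : Filter.Tendsto (fun L => (1 - p i) ^ L) Filter.atTop (nhds 0) :=
    ENNReal.tendsto_pow_atTop_nhds_zero_of_lt_one
      (ENNReal.sub_lt_self ENNReal.one_ne_top one_ne_zero hi)
  exact nonpos_iff_eq_zero.mp (ge_of_tendsto' hlim hbound)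

end Sampling

section Collector

variable {Ω ι : Type*} [MeasurableSpace Ω] {μ : Measure Ω} [IsProbabilityMeasure μ]
  [Fintype ι] [DecidableEq ι] {p : ι → ℝ≥0∞} {X : ℕ → Ω → ι}

lemma measure_not_collected (hp : ∑ i, p i = 1)
    (hX : iIndepFun (m := fun _ => (⊤ : MeasurableSpace ι)) X μ)
    (hlaw : ∀ u i, μ {ω | X u ω = i} = p i) (m : ι → ℕ) (t : ℕ) :
    μ {ω | ¬ ∀ i, m i ≤ Nat.count (fun u => X u ω = i) t} = 1 - completionProb p m t := by
  have hset : {ω | ¬ ∀ i, m i ≤ Nat.count (fun u => X u ω = i) t}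
      = {ω | ¬ ∀ i, m i ≤ letterCount (fun u : Fin t => X u ω) i} :=
    Set.ext fun ω => by simp only [Set.mem_ofPred_eq, letterCount_eq_count fun u => X u ω]
  rw [hset, measure_sample_path_eq_sum hp (hX.precomp (Fin.val_injective (n := t)))
    (fun u i => hlaw u i) fun f => ¬ ∀ i, m i ≤ letterCount f i]
  refine ENNReal.eq_sub_of_add_eq
    (ne_top_of_le_ne_top ENNReal.one_ne_top (completionProb_le_one hp m t)) ?_
  rw [completionProb, sum_filter_not_add_sum_filter, ← Fintype.sum_pow, hp, one_pow]

lemma measure_never_collected (hp : ∑ i, p i = 1) (hpos : ∀ i, p i ≠ 0)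
    (hX : iIndepFun (m := fun _ => (⊤ : MeasurableSpace ι)) X μ)
    (hlaw : ∀ u i, μ {ω | X u ω = i} = p i) (m : ι → ℕ) :
    μ {ω | ∀ t, ¬ ∀ i, m i ≤ Nat.count (fun u => X u ω = i) t} = 0 := by
  refine measure_mono_null (fun ω hω => ?_) (measure_iUnion_null fun i =>
    measure_iUnion_null fun N => measure_forall_ge_ne_eq_zero hp hX hlaw (hpos i) N)
  -- counts only grow, so some single letter stays below its quota forever
  obtain ⟨i, hi⟩ : ∃ i, ∀ s, Nat.count (fun u => X u ω = i) s < m i := by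
    by_contra! h
    choose s hs using h
    exact hω (∑ i, s i) fun i =>
      (hs i).trans (Nat.count_monotone _ (single_le_sum (by simp) (mem_univ i)))
  obtain ⟨N, hN⟩ := Nat.exists_forall_ge_not_of_count_lt hi
  exact Set.mem_iUnion₂.mpr ⟨i, N, hN⟩

lemma measure_lt_hittingTime (hp : ∑ i, p i = 1) (hpos : ∀ i, p i ≠ 0)
    (hX : iIndepFun (m := fun _ => (⊤ : MeasurableSpace ι)) X μ)
    (hlaw : ∀ u i, μ {ω | X u ω = i} = p i) (m : ι → ℕ) (T : Ω → ℕ)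
    (hT : ∀ ω, T ω = sInf {t | ∀ i, m i ≤ Nat.count (fun u => X u ω = i) t}) (t : ℕ) :
    μ {ω | t < T ω} = 1 - completionProb p m t := by
  rw [← measure_not_collected hp hX hlaw m t]
  refine le_antisymm (measure_mono fun ω (hω : t < T ω) hdone => ?_) ?_
  · have hle : T ω ≤ t := by rw [hT ω]; exact Nat.sInf_le hdone
    exact hle.not_gt hω
  · set never := {ω | ∀ s, ¬ ∀ i, m i ≤ Nat.count (fun u => X u ω = i) s}
    calc μ {ω | ¬ ∀ i, m i ≤ Nat.count (fun u => X u ω = i) t}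
        ≤ μ ({ω | t < T ω} ∪ never) := measure_mono fun ω hω => by
          by_cases hdone : ∃ s, ∀ i, m i ≤ Nat.count (fun u => X u ω = i) s
          · have hT_done := hT ω ▸ Nat.sInf_mem hdone
            refine Or.inl (show t < T ω from lt_of_not_ge fun hle => hω fun i => ?_)
            exact (hT_done i).trans (Nat.count_monotone _ hle)
          · exact Or.inr (not_exists.mp hdone)
      _ ≤ μ {ω | t < T ω} + μ never := measure_union_le _ _
      _ = μ {ω | t < T ω} := by rw [measure_never_collected hp hpos hX hlaw m, add_zero]

end Collector

lemma lintegral_exp_neg_mul_pow_Ioi (t : ℕ) :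
    ∫⁻ x in Set.Ioi (0 : ℝ), ENNReal.ofReal (exp (-x) * x ^ t) = t ! := by
  have hgamma : ∫ x in Set.Ioi (0 : ℝ), exp (-x) * x ^ t = t ! := by
    rw [← Real.Gamma_nat_eq_factorial, Real.Gamma_eq_integral (by positivity)]
    refine setIntegral_congr_fun measurableSet_Ioi fun x _ => ?_
    simp [← Real.rpow_natCast]
  rw [← ofReal_integral_eq_lintegral_ofReal, hgamma, ENNReal.ofReal_natCast]
  · have := Real.GammaIntegral_convergent (s := t + 1) (by positivity)
    refine this.congr_fun (fun x _ => ?_) measurableSet_Ioi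
    simp [← Real.rpow_natCast]
  · filter_upwards [ae_restrict_mem measurableSet_Ioi] with x hx
    have : (0 : ℝ) < x := hx
    positivity

lemma lintegral_exp_neg_mul_tsum_pow_div_factorial (a : ℕ → ℝ≥0∞) {z : ℝ} (hz : 0 ≤ z) :
    ∫⁻ x in Set.Ioi (0 : ℝ),
        ENNReal.ofReal (exp (-x)) * ∑' t, a t * ENNReal.ofReal ((x * z) ^ t / t !)
      = ∑' t, a t * ENNReal.ofReal z ^ t := by
  have hterm : ∀ t x, ENNReal.ofReal (exp (-x)) * (a t * ENNReal.ofReal ((x * z) ^ t / t !))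
      = a t * ENNReal.ofReal (z ^ t / t !) * ENNReal.ofReal (exp (-x) * x ^ t) := fun t x => by
    rw [mul_pow, mul_comm (x ^ t), mul_div_right_comm, ENNReal.ofReal_mul (by positivity),
      ENNReal.ofReal_mul (exp_nonneg _)]
    ring
  have hmeas : ∀ t, Measurable fun x : ℝ => ENNReal.ofReal (exp (-x) * x ^ t) := fun t => by
    fun_prop
  simp_rw [← ENNReal.tsum_mul_left, hterm]
  rw [lintegral_tsum fun t => ((hmeas t).const_mul _).aemeasurable]
  refine tsum_congr fun t => ?_
  rw [lintegral_const_mul _ (hmeas t), lintegral_exp_neg_mul_pow_Ioi, mul_assoc,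
    ← ENNReal.ofReal_natCast, ← ENNReal.ofReal_mul (by positivity),
    div_mul_cancel₀ _ (by positivity), ENNReal.ofReal_pow hz]

theorem stmt5_general
    (n : ℕ)
    (ρ : Fin n → ℝ) (hρpos : ∀ i, 0 < ρ i) (hρsum : ∑ i, ρ i = 1)
    (m : Fin n → ℕ)
    (Ω : Type*) [MeasurableSpace Ω] (μ : Measure Ω) [IsProbabilityMeasure μ]
    -- i.i.d. samples, sample `t` equals `i` with probability `ρ i`
    (X : ℕ → Ω → Fin n)
    (hindep : iIndepFun (m := fun _ => (⊤ : MeasurableSpace (Fin n))) X μ)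
    (hdist : ∀ t i, μ {ω | X t ω = i} = ENNReal.ofReal (ρ i))
    -- `T` : first time every item `i` has been drawn at least `m i` times
    (T : Ω → ℕ)
    (hT : ∀ ω, T ω = sInf {t : ℕ | ∀ i,
      m i ≤ ((Finset.range t).filter (fun u => X u ω = i)).card})
    (z : ℝ) (hz0 : 0 ≤ z) :
    ∑' i : ℕ, (μ {ω | i < T ω}).toReal * z ^ i
      = ∫ x in Set.Ioi (0 : ℝ),
          (Real.exp (-(x * (1 - z)))
            - ∏ i, (Real.exp (-(ρ i * x * (1 - z)))
                - truncExp (m i) (ρ i * x * z) * Real.exp (-(ρ i * x)))) := by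
  have hρ : ∀ i, 0 ≤ ρ i := fun i => (hρpos i).le
  have hp : ∑ i, ENNReal.ofReal (ρ i) = 1 := by
    rw [← ENNReal.ofReal_sum_of_nonneg fun i _ => hρ i, hρsum, ENNReal.ofReal_one]
  set q := completionProb (fun i => ENNReal.ofReal (ρ i)) m
  have htail : ∀ t, μ {ω | t < T ω} = 1 - q t :=
    measure_lt_hittingTime hp (fun i => (ENNReal.ofReal_pos.mpr (hρpos i)).ne') hindep hdist m T
      (by simpa only [← Nat.count_eq_card_filter_range] using hT)
  simp_rw [exp_sub_prod_eq_exp_neg_mul hρsum m]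
  have hnonneg : 0 ≤ᵐ[volume.restrict (Set.Ioi 0)] fun x => exp (-x)
      * (exp (x * z) - ∏ i, (exp (ρ i * (x * z)) - truncExp (m i) (ρ i * (x * z)))) :=
    ae_restrict_of_forall_mem measurableSet_Ioi fun x hx => mul_nonneg (exp_nonneg _)
      (sub_nonneg.mpr (prod_exp_sub_truncExp_le_exp hρ hρsum m (mul_nonneg (le_of_lt hx) hz0)))
  have hseries : ∀ x ∈ Set.Ioi (0 : ℝ), ENNReal.ofReal (exp (-x)
      * (exp (x * z) - ∏ i, (exp (ρ i * (x * z)) - truncExp (m i) (ρ i * (x * z)))))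
      = ENNReal.ofReal (exp (-x)) * ∑' t, (1 - q t) * ENNReal.ofReal ((x * z) ^ t / t !) :=
    fun x hx => by rw [ENNReal.ofReal_mul (exp_nonneg _),
      ofReal_exp_sub_prod_exp_sub_truncExp hρ hp m (mul_nonneg (le_of_lt hx) hz0)]
  have hfinite : ∀ t, (1 - q t) * ENNReal.ofReal z ^ t ≠ ∞ := fun t =>
    ENNReal.mul_ne_top (ne_top_of_le_ne_top ENNReal.one_ne_top tsub_le_self)
      (ENNReal.pow_ne_top ENNReal.ofReal_ne_top)
  rw [integral_eq_lintegral_of_nonneg_ae hnonneg (Continuous.aestronglyMeasurable (by fun_prop)),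
    setLIntegral_congr_fun measurableSet_Ioi hseries,
    lintegral_exp_neg_mul_tsum_pow_div_factorial _ hz0, ENNReal.tsum_toReal_eq hfinite]
  simp [htail, ENNReal.toReal_mul, ENNReal.toReal_pow, hz0]

/-- tail-probability generating function of the coupon collector's
brotherhood waiting time `T`:
`φ_T(z) = ∫_0^∞ { e^{-x(1-z)} - ∏_i [ e^{-ρ_i x(1-z)} - S_{m_i}(ρ_i x z) e^{-ρ_i x} ] } dx`
for `0 ≤ z ≤ 1`. -/
theorem stmt5
    (n : ℕ) (hn : 1 ≤ n)
    (ρ : Fin n → ℝ) (hρpos : ∀ i, 0 < ρ i) (hρsum : ∑ i, ρ i = 1)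
    (m : Fin n → ℕ) (hm : ∃ i, m i ≠ 0)
    (Ω : Type*) [MeasurableSpace Ω] (μ : Measure Ω) [IsProbabilityMeasure μ]
    -- i.i.d. samples, sample `t` equals `i` with probability `ρ i`
    (X : ℕ → Ω → Fin n)
    (hindep : iIndepFun (m := fun _ => (⊤ : MeasurableSpace (Fin n))) X μ)
    (hdist : ∀ t i, μ {ω | X t ω = i} = ENNReal.ofReal (ρ i))
    -- `T` : first time every item `i` has been drawn at least `m i` times
    (T : Ω → ℕ)
    (hT : ∀ ω, T ω = sInf {t : ℕ | ∀ i,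
      m i ≤ ((Finset.range t).filter (fun u => X u ω = i)).card})
    (z : ℝ) (hz0 : 0 ≤ z) (hz1 : z ≤ 1) :
    ∑' i : ℕ, (μ {ω | i < T ω}).toReal * z ^ i
      = ∫ x in Set.Ioi (0 : ℝ),
          (Real.exp (-(x * (1 - z)))
            - ∏ i, (Real.exp (-(ρ i * x * (1 - z)))
                - truncExp (m i) (ρ i * x * z) * Real.exp (-(ρ i * x)))) :=
  stmt5_general n ρ hρpos hρsum m Ω μ X hindep hdist T hT z hz0
end

section
/- In the uniform coupon collector's brotherhood problem with n coupons, the expected number of samples T_n(m) needed to collect at least m copies of every coupon satisfies E[T_n(m)] = n ∫_0^∞ [ 1 - (1 - S_m(x) e^{-x})^n ] dx, where S_m(x) = ∑_{j=0}^{m-1} x^j/j!. -/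
/-!
Call a map `[t] → [n]` covering if it takes every value at least `m` times, and let `c_t` be the
number of covering maps. Splitting off the fibre of the last value shows that the exponential
generating function `∑ c_t x^t / t!` equals `(e^x - S_m(x))^n`, so the `n^t - c_t` non-covering maps
have generating function `e^{nx} - (e^x - S_m(x))^n`. After multiplying by `e^{-nx}` this is the
integrand, and integrating termwise with `∫_0^∞ x^t e^{-nx} dx = t!/n^{t+1}` gives
`n ∫_0^∞ [1 - (1 - S_m(x) e^{-x})^n] dx = ∑_t (n^t - c_t)/n^t = ∑_t P(T > t) = E[T]`.
By Bernoulli's inequality the integrand is at most `n S_m(x) e^{-x}`, so this series converges,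
which in turn shows that all coupons are collected almost surely.
-/

open MeasureTheory ProbabilityTheory Finset Real

open scoped Nat ENNReal

/-! ### Maps taking every value at least `m` times -/

section CoveringMaps

variable (m : ℕ) (α β : Type*) [Fintype α] [DecidableEq α] [Fintype β] [DecidableEq β]

def coveringMaps : Finset (α → β) := {f | ∀ b, m ≤ #{a | f a = b}}

variable {m α β}

lemma mem_coveringMaps {f : α → β} :
    f ∈ coveringMaps m α β ↔ ∀ b, m ≤ #{a | f a = b} := by
  simp [coveringMaps]

lemma card_coveringMaps_congr {α' : Type*} [Fintype α'] [DecidableEq α'] (e : α ≃ α') :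
    #(coveringMaps m α β) = #(coveringMaps m α' β) := by
  refine card_equiv (e.arrowCongr (Equiv.refl β)) fun f => ?_
  simp only [mem_coveringMaps, Equiv.arrowCongr_apply, Equiv.coe_refl, Function.comp_apply, id]
  refine forall_congr' fun b => ?_
  rw [card_equiv e (t := {a' | f (e.symm a') = b}) (by simp)]

variable {n : ℕ} (s : Finset α)

def extendLast (g : ↥sᶜ → Fin n) (a : α) : Fin (n + 1) :=
  if h : a ∈ s then Fin.last n else (g ⟨a, mem_compl.2 h⟩).castSucc

lemma filter_extendLast_eq_last (g : ↥sᶜ → Fin n) :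
    ({a | extendLast s g a = Fin.last n} : Finset α) = s := by
  ext a
  by_cases h : a ∈ s <;> simp [extendLast, h, Fin.castSucc_ne_last]

lemma extendLast_injective : Function.Injective (extendLast (n := n) s) := by
  intro g g' h
  funext u
  simpa [extendLast, mem_compl.1 u.2] using congrFun h u

lemma card_extendLast_eq_castSucc (g : ↥sᶜ → Fin n) (i : Fin n) :
    #{a | extendLast s g a = i.castSucc} = #{u | g u = i} := by
  rw [← card_map (Function.Embedding.subtype _)]
  congr 1
  ext a
  simp only [mem_filter, mem_univ, true_and, mem_map, Function.Embedding.coe_subtype]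
  by_cases h : a ∈ s
  · simp [extendLast, h, (Fin.castSucc_ne_last i).symm]
  · simp [extendLast, h]

lemma filter_coveringMaps_lastFiber_eq_map (hs : m ≤ #s) :
    {f ∈ coveringMaps m α (Fin (n + 1)) | ({a | f a = Fin.last n} : Finset α) = s} =
      (coveringMaps m (↥sᶜ) (Fin n)).map ⟨extendLast s, extendLast_injective s⟩ := by
  ext f
  rw [mem_map, mem_filter, mem_coveringMaps]
  constructor
  · rintro ⟨hcov, hfib⟩
    have hlast : ∀ a, f a = Fin.last n ↔ a ∈ s := fun a => by simp [← hfib]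
    let g : ↥sᶜ → Fin n := fun u => (f u).castPred fun h => mem_compl.1 u.2 ((hlast u).1 h)
    have hfg : extendLast s g = f := funext fun a => by
      by_cases h : a ∈ s
      · simp [extendLast, h, (hlast a).2 h]
      · simp [extendLast, h, g]
    refine ⟨g, mem_coveringMaps.2 fun i => ?_, hfg⟩
    rw [← card_extendLast_eq_castSucc, hfg]
    exact hcov _
  · rintro ⟨g, hg, rfl⟩
    rw [mem_coveringMaps] at hg
    rw [Function.Embedding.coeFn_mk]
    refine ⟨fun j => ?_, filter_extendLast_eq_last s g⟩
    induction j using Fin.lastCases with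
    | last => rwa [filter_extendLast_eq_last]
    | cast i => rw [card_extendLast_eq_castSucc]; exact hg i

lemma card_filter_coveringMaps_lastFiber :
    #{f ∈ coveringMaps m α (Fin (n + 1)) | ({a | f a = Fin.last n} : Finset α) = s} =
      if m ≤ #s then #(coveringMaps m (↥sᶜ) (Fin n)) else 0 := by
  split_ifs with hs
  · rw [filter_coveringMaps_lastFiber_eq_map s hs, card_map]
  · rw [card_eq_zero, filter_eq_empty_iff]
    intro f hf hfib
    exact hs (hfib ▸ mem_coveringMaps.1 hf (Fin.last n))

end CoveringMaps

def coverCount (m n t : ℕ) : ℕ := #(coveringMaps m (Fin t) (Fin n))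

def missCount (m n t : ℕ) : ℕ := #(coveringMaps m (Fin t) (Fin n))ᶜ

section CoverCount

variable {m n : ℕ}

lemma card_coveringMaps_eq_coverCount {α : Type*} [Fintype α] [DecidableEq α] :
    #(coveringMaps m α (Fin n)) = coverCount m n (Fintype.card α) :=
  card_coveringMaps_congr (Fintype.equivFin α)

lemma coverCount_zero (t : ℕ) : coverCount m 0 t = 0 ^ t := by
  rw [coverCount, coveringMaps, filter_true_of_mem fun f _ i => i.elim0, card_univ]
  simp

lemma coverCount_succ (t : ℕ) :
    coverCount m (n + 1) t =
      ∑ j ∈ range (t + 1), t.choose j * if m ≤ j then coverCount m n (t - j) else 0 := by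
  rw [coverCount, card_eq_sum_card_fiberwise
    (f := fun f => ({a | f a = Fin.last n} : Finset (Fin t))) (t := univ.powerset) (by simp)]
  simp_rw [card_filter_coveringMaps_lastFiber, card_coveringMaps_eq_coverCount, Fintype.card_coe,
    card_compl, Fintype.card_fin]
  rw [sum_powerset_apply_card (fun j => if m ≤ j then coverCount m n (t - j) else 0)]
  simp

lemma coverCount_add_missCount (t : ℕ) : coverCount m n t + missCount m n t = n ^ t := by
  simp [coverCount, missCount, card_add_card_compl]

end CoverCount

/-! ### Generating functions and the integral -/

lemma hasSum_sum_range_mul_of_nonneg {f g : ℕ → ℝ} {a b : ℝ} (hf : HasSum f a) (hg : HasSum g b)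
    (hf0 : ∀ k, 0 ≤ f k) (hg0 : ∀ k, 0 ≤ g k) :
    HasSum (fun t => ∑ k ∈ range (t + 1), f k * g (t - k)) (a * b) := by
  have hf' : Summable fun k => ‖f k‖ := by simpa [Real.norm_of_nonneg (hf0 _)] using hf.summable
  have hg' : Summable fun k => ‖g k‖ := by simpa [Real.norm_of_nonneg (hg0 _)] using hg.summable
  simpa [hf.tsum_eq, hg.tsum_eq] using hasSum_sum_range_mul_of_summable_norm hf' hg'

lemma hasSum_exp_sub_truncExp (m : ℕ) (x : ℝ) :
    HasSum (fun j => if m ≤ j then x ^ j / j ! else 0) (exp x - truncExp m x) := by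
  have hexp : HasSum (fun j => x ^ j / j !) (exp x) := by
    simpa [Real.exp_eq_exp_ℝ] using NormedSpace.expSeries_div_hasSum_exp x
  have htrunc : HasSum (fun j => if j < m then x ^ j / j ! else 0) (truncExp m x) := by
    have : HasSum (fun j => if j < m then x ^ j / j ! else 0)
        (∑ j ∈ range m, if j < m then x ^ j / j ! else 0) :=
      hasSum_sum_of_ne_finset_zero fun j hj => if_neg (by simpa using hj)
    rwa [sum_congr rfl fun j hj => if_pos (mem_range.1 hj)] at this
  refine (hexp.sub htrunc).congr_fun fun j => ?_
  split_ifs <;> first | (exfalso; omega) | ring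

theorem hasSum_coverCount (m : ℕ) {x : ℝ} (hx : 0 ≤ x) (n : ℕ) :
    HasSum (fun t => (coverCount m n t : ℝ) * x ^ t / t !) ((exp x - truncExp m x) ^ n) := by
  induction n with
  | zero =>
    rw [pow_zero]
    convert hasSum_single (f := fun t => (coverCount m 0 t : ℝ) * x ^ t / t !) 0
      (fun t ht => by simp [coverCount_zero, ht]) using 1
    simp [coverCount_zero]
  | succ n ih =>
    rw [pow_succ']
    refine (hasSum_sum_range_mul_of_nonneg (hasSum_exp_sub_truncExp m x) ih
      (fun j => by positivity) (fun t => by positivity)).congr_fun fun t => ?_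
    rw [coverCount_succ, Nat.cast_sum, sum_mul, sum_div]
    refine sum_congr rfl fun j hj => ?_
    have hjt : j ≤ t := Nat.lt_succ_iff.1 (mem_range.1 hj)
    split_ifs
    · rw [← pow_sub_mul_pow x hjt]
      push_cast
      rw [Nat.cast_choose ℝ hjt]
      field_simp
    · simp

theorem hasSum_missCount (m n : ℕ) {x : ℝ} (hx : 0 ≤ x) :
    HasSum (fun t => (missCount m n t : ℝ) * x ^ t / t !)
      (exp (n * x) - (exp x - truncExp m x) ^ n) := by
  have hexp : HasSum (fun t => (n * x) ^ t / t !) (exp (n * x)) := by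
    simpa [Real.exp_eq_exp_ℝ] using NormedSpace.expSeries_div_hasSum_exp ((n : ℝ) * x)
  refine (hexp.sub (hasSum_coverCount m hx n)).congr_fun fun t => ?_
  have hcount : (missCount m n t : ℝ) = n ^ t - coverCount m n t := by
    rw [eq_sub_iff_add_eq', ← Nat.cast_add, coverCount_add_missCount, Nat.cast_pow]
  rw [hcount, mul_pow]
  ring

theorem hasSum_one_sub_one_sub_pow (m n : ℕ) {x : ℝ} (hx : 0 ≤ x) :
    HasSum (fun t => (missCount m n t : ℝ) * x ^ t / t ! * exp (-(n * x)))
      (1 - (1 - truncExp m x * exp (-x)) ^ n) := by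
  have hval : (exp (n * x) - (exp x - truncExp m x) ^ n) * exp (-(n * x)) =
      1 - (1 - truncExp m x * exp (-x)) ^ n := by
    have hpow : exp (-(n * x)) = exp (-x) ^ n := by rw [← Real.exp_nat_mul]; ring_nf
    rw [sub_mul, ← exp_add, hpow, ← mul_pow, sub_mul, ← exp_add]
    simp
  simpa only [hval] using (hasSum_missCount m n hx).mul_right (exp (-(n * x)))

lemma integral_pow_mul_exp_neg_mul (t : ℕ) {r : ℝ} (hr : 0 < r) :
    ∫ x in Set.Ioi 0, x ^ t * exp (-(r * x)) = t ! / r ^ (t + 1) := by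
  have h := integral_rpow_mul_exp_neg_mul_Ioi (a := t + 1) (by positivity) hr
  simp only [add_sub_cancel_right, Real.rpow_natCast, Real.Gamma_nat_eq_factorial] at h
  rw [← Nat.cast_succ, Real.rpow_natCast] at h
  rw [h, one_div_pow, div_mul_eq_mul_div, one_mul]

lemma integrableOn_pow_mul_exp_neg_mul (t : ℕ) {r : ℝ} (hr : 0 < r) :
    IntegrableOn (fun x => x ^ t * exp (-(r * x))) (Set.Ioi 0) :=
  Integrable.of_integral_ne_zero (by rw [integral_pow_mul_exp_neg_mul t hr]; positivity)

lemma lintegral_pow_mul_exp_neg_mul (t : ℕ) {r : ℝ} (hr : 0 < r) :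
    ∫⁻ x in Set.Ioi 0, ENNReal.ofReal (x ^ t * exp (-(r * x))) =
      ENNReal.ofReal (t ! / r ^ (t + 1)) := by
  rw [← integral_pow_mul_exp_neg_mul t hr,
    ofReal_integral_eq_lintegral_ofReal (integrableOn_pow_mul_exp_neg_mul t hr)]
  exact (ae_restrict_iff' measurableSet_Ioi).2 (.of_forall fun x (hx : 0 < x) => by positivity)

lemma lintegral_mul_pow_div_factorial_mul_exp_neg_mul (t : ℕ) {c r : ℝ} (hc : 0 ≤ c)
    (hr : 0 < r) :
    ∫⁻ x in Set.Ioi 0, ENNReal.ofReal (c * x ^ t / t ! * exp (-(r * x))) =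
      ENNReal.ofReal (c / r ^ (t + 1)) := by
  have hsplit : ∀ x : ℝ, c * x ^ t / t ! * exp (-(r * x)) = c / t ! * (x ^ t * exp (-(r * x))) :=
    fun x => by ring
  simp_rw [hsplit, ENNReal.ofReal_mul (by positivity : 0 ≤ c / t !)]
  rw [lintegral_const_mul' _ _ ENNReal.ofReal_ne_top, lintegral_pow_mul_exp_neg_mul t hr,
    ← ENNReal.ofReal_mul (by positivity)]
  congr 1
  field_simp

theorem lintegral_one_sub_one_sub_pow (m : ℕ) {n : ℕ} (hn : 0 < n) :
    ∫⁻ x in Set.Ioi 0, ENNReal.ofReal (1 - (1 - truncExp m x * exp (-x)) ^ n) =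
      ∑' t, ENNReal.ofReal (missCount m n t / (n : ℝ) ^ (t + 1)) := by
  rw [setLIntegral_congr_fun measurableSet_Ioi fun x (hx : 0 < x) => by
    rw [← (hasSum_one_sub_one_sub_pow m n hx.le).tsum_eq, ENNReal.ofReal_tsum_of_nonneg
      (fun t => by positivity) (hasSum_one_sub_one_sub_pow m n hx.le).summable]]
  rw [lintegral_tsum fun t => (by fun_prop : Measurable _).aemeasurable]
  exact tsum_congr fun t =>
    lintegral_mul_pow_div_factorial_mul_exp_neg_mul t (Nat.cast_nonneg _) (Nat.cast_pos.2 hn)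

lemma one_sub_one_sub_pow_mem_Icc (m n : ℕ) {x : ℝ} (hx : 0 ≤ x) :
    1 - (1 - truncExp m x * exp (-x)) ^ n ∈ Set.Icc 0 (n * (truncExp m x * exp (-x))) := by
  have hp0 : 0 ≤ truncExp m x * exp (-x) := by unfold truncExp; positivity
  have hp1 : truncExp m x * exp (-x) ≤ 1 := calc
    truncExp m x * exp (-x) ≤ exp x * exp (-x) :=
      mul_le_mul_of_nonneg_right (Real.sum_le_exp_of_nonneg hx m) (exp_pos _).le
    _ = 1 := by rw [← exp_add, add_neg_cancel, exp_zero]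
  constructor
  · exact sub_nonneg.2 (pow_le_one₀ (by linarith) (by linarith))
  · have hbernoulli : 1 - n * (truncExp m x * exp (-x)) ≤ (1 - truncExp m x * exp (-x)) ^ n := by
      simpa [sub_eq_add_neg] using
        one_add_mul_le_pow (a := -(truncExp m x * exp (-x))) (by linarith) n
    linarith

theorem integrableOn_one_sub_one_sub_pow (m n : ℕ) :
    IntegrableOn (fun x => 1 - (1 - truncExp m x * exp (-x)) ^ n) (Set.Ioi 0) := by
  have hbound : IntegrableOn (fun x => ∑ j ∈ range m, (n / j ! : ℝ) * (x ^ j * exp (-(1 * x))))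
      (Set.Ioi 0) :=
    integrable_finsetSum _ fun j _ => (integrableOn_pow_mul_exp_neg_mul j one_pos).const_mul _
  refine hbound.mono' (by unfold truncExp; fun_prop) ((ae_restrict_iff' measurableSet_Ioi).2
    (.of_forall fun x (hx : 0 < x) => ?_))
  obtain ⟨h0, h1⟩ := one_sub_one_sub_pow_mem_Icc m n hx.le
  rw [Real.norm_of_nonneg h0]
  refine h1.trans_eq ?_
  simp only [truncExp, one_mul, sum_mul, mul_sum]
  exact sum_congr rfl fun j _ => by ring

section Integral

variable (m : ℕ) {n : ℕ}

lemma tsum_missCount_div_pow_eq (hn : 0 < n) :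
    ∑' t, ENNReal.ofReal (missCount m n t / (n : ℝ) ^ t) =
      n * ∫⁻ x in Set.Ioi 0, ENNReal.ofReal (1 - (1 - truncExp m x * exp (-x)) ^ n) := by
  rw [lintegral_one_sub_one_sub_pow m hn, ← ENNReal.tsum_mul_left]
  refine tsum_congr fun t => ?_
  rw [← ENNReal.ofReal_natCast, ← ENNReal.ofReal_mul (by positivity)]
  congr 1
  field_simp
  ring

lemma tsum_missCount_div_pow_ne_top (hn : 0 < n) :
    ∑' t, ENNReal.ofReal (missCount m n t / (n : ℝ) ^ t) ≠ ∞ := by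
  rw [tsum_missCount_div_pow_eq m hn]
  exact ENNReal.mul_ne_top (ENNReal.natCast_ne_top n)
    (integrableOn_one_sub_one_sub_pow m n).lintegral_lt_top.ne

theorem natCast_mul_integral_one_sub_one_sub_pow (hn : 0 < n) :
    n * ∫ x in Set.Ioi 0, (1 - (1 - truncExp m x * exp (-x)) ^ n) =
      (∑' t, ENNReal.ofReal (missCount m n t / (n : ℝ) ^ t)).toReal := by
  rw [tsum_missCount_div_pow_eq m hn, ENNReal.toReal_mul, ENNReal.toReal_natCast,
    integral_eq_lintegral_of_nonneg_ae ((ae_restrict_iff' measurableSet_Ioi).2 (.of_forall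
      fun x (hx : 0 < x) => (one_sub_one_sub_pow_mem_Icc m n hx.le).1))
      (integrableOn_one_sub_one_sub_pow m n).aestronglyMeasurable]

end Integral

/-! ### Collecting coupons -/

section NullMeasurable

variable {Ω : Type*} [MeasurableSpace Ω] {μ : Measure Ω}

lemma nullMeasurableSet_of_measure_add_measure_compl_le [IsFiniteMeasure μ] {s : Set Ω}
    (h : μ s + μ sᶜ ≤ μ Set.univ) : NullMeasurableSet s μ := by
  set H := toMeasurable μ s
  set H' := toMeasurable μ sᶜ
  have hunion : H ∪ H' = Set.univ := Set.eq_univ_of_subset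
    (Set.union_subset_union (subset_toMeasurable μ s) (subset_toMeasurable μ sᶜ))
    (Set.union_compl_self s)
  have hinter : μ (H ∩ H') = 0 := by
    have := measure_union_add_inter (μ := μ) H (measurableSet_toMeasurable μ sᶜ)
    rw [hunion, measure_toMeasurable, measure_toMeasurable] at this
    refine nonpos_iff_eq_zero.1 (ENNReal.le_of_add_le_add_left (measure_ne_top μ Set.univ) ?_)
    rwa [this, add_zero]
  refine ⟨H, measurableSet_toMeasurable μ s, ?_⟩
  rw [ae_eq_set]
  refine ⟨?_, measure_mono_null (t := H ∩ H')
    (fun ω hω => ⟨hω.1, subset_toMeasurable μ sᶜ hω.2⟩) hinter⟩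
  rw [Set.sdiff_eq_empty.2 (subset_toMeasurable μ s), measure_empty]

lemma nullMeasurableSet_of_sum_measure_le [IsFiniteMeasure μ] {ι : Type*} [Fintype ι]
    [DecidableEq ι] {A : ι → Set Ω} (hcover : ∀ ω, ∃ i, ω ∈ A i)
    (hsum : ∑ i, μ (A i) ≤ μ Set.univ) (i : ι) : NullMeasurableSet (A i) μ := by
  refine nullMeasurableSet_of_measure_add_measure_compl_le (le_trans ?_ hsum)
  rw [← add_sum_erase _ _ (mem_univ i)]
  gcongr
  refine (measure_mono fun ω hω => ?_).trans (measure_biUnion_finset_le _ _)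
  obtain ⟨j, hj⟩ := hcover ω
  exact Set.mem_biUnion (mem_erase.2 ⟨fun hji => hω (hji ▸ hj), mem_univ j⟩) hj

lemma aemeasurable_of_nullMeasurableSet_lt {T : Ω → ℕ}
    (hT : ∀ t, NullMeasurableSet {ω | t < T ω} μ) : AEMeasurable T μ :=
  NullMeasurable.aemeasurable (measurable_of_Ioi (δ := NullMeasurableSpace Ω μ) hT)

lemma lintegral_natCast_eq_tsum_measure_lt {T : Ω → ℕ}
    (hT : ∀ t, NullMeasurableSet {ω | t < T ω} μ) :
    ∫⁻ ω, (T ω : ℝ≥0∞) ∂μ = ∑' t, μ {ω | t < T ω} := by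
  have hpt : ∀ ω, (T ω : ℝ≥0∞) = ∑' t, {ω | t < T ω}.indicator (fun _ => 1) ω := fun ω => by
    rw [tsum_eq_sum (s := range (T ω)) fun t ht => Set.indicator_of_notMem (by simpa using ht) _,
      sum_congr rfl fun t ht => Set.indicator_of_mem (s := {ω | t < T ω}) (mem_range.1 ht) _]
    simp
  simp_rw [hpt]
  rw [lintegral_tsum fun t => aemeasurable_const.indicator₀ (hT t)]
  exact tsum_congr fun t => lintegral_indicator_one₀ (hT t)

end NullMeasurable

section Collected

variable {β : Type*} [DecidableEq β] {m t : ℕ} {x : ℕ → β}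

def Collected (m : ℕ) (x : ℕ → β) (t : ℕ) : Prop := ∀ b, m ≤ #{u ∈ range t | x u = b}

lemma Collected.mono {t' : ℕ} (h : Collected m x t) (htt' : t ≤ t') : Collected m x t' :=
  fun b => (h b).trans (card_le_card (filter_subset_filter _ (range_subset_range.2 htt')))

lemma lt_sInf_collected_iff (h : ∃ t, Collected m x t) :
    t < sInf {t | Collected m x t} ↔ ¬Collected m x t := by
  refine ⟨fun hlt hc => (Nat.sInf_le hc).not_gt hlt, fun hc => ?_⟩
  by_contra hle
  exact hc (Collected.mono (Nat.sInf_mem h) (not_lt.1 hle))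

variable [Fintype β]

lemma collected_iff_mem_coveringMaps :
    Collected m x t ↔ (fun v : Fin t => x v) ∈ coveringMaps m (Fin t) β := by
  rw [mem_coveringMaps]
  refine forall_congr' fun b => ?_
  rw [← Nat.Iio_eq_range, ← Fin.map_valEmbedding_univ, filter_map, card_map]
  rfl

lemma setOf_not_collected_eq {Ω : Type*} (X : ℕ → Ω → β) (m t : ℕ) :
    {ω | ¬Collected m (X · ω) t} =
      ⋃ f ∈ (coveringMaps m (Fin t) β)ᶜ, {ω | ∀ v : Fin t, X v ω = f v} := by
  ext ω
  simp only [Set.mem_ofPred_eq, collected_iff_mem_coveringMaps, Set.mem_iUnion, mem_compl,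
    exists_prop]
  refine ⟨fun h => ⟨_, h, fun v => rfl⟩, ?_⟩
  rintro ⟨f, hf, hfω⟩
  rwa [show (fun v : Fin t => X v ω) = f from funext hfω]

end Collected

structure IsUniformDraws {Ω : Type*} [MeasurableSpace Ω] {n : ℕ} (X : ℕ → Ω → Fin n)
    (μ : Measure Ω) : Prop where
  indep : iIndepFun (m := fun _ => (⊤ : MeasurableSpace (Fin n))) X μ
  measure_eq : ∀ t i, μ {ω | X t ω = i} = ENNReal.ofReal (1 / (n : ℝ))

namespace IsUniformDraws

variable {Ω : Type*} [MeasurableSpace Ω] {μ : Measure Ω} {n m : ℕ} {X : ℕ → Ω → Fin n}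

lemma measure_prefix (hX : IsUniformDraws X μ) {t : ℕ} (f : Fin t → Fin n) :
    μ {ω | ∀ v : Fin t, X v ω = f v} = ENNReal.ofReal (1 / (n : ℝ)) ^ t := by
  have h := (hX.indep.precomp (Fin.val_injective (n := t))).meas_iInter
    (s := fun v : Fin t => {ω | X v ω = f v}) fun v => ⟨{f v}, trivial, rfl⟩
  rw [Set.ofPred_forall, h]
  simp [hX.measure_eq]

variable [IsProbabilityMeasure μ]

-- The draws need not be measurable: null-measurability comes from the `n ^ t` prefix events
-- covering `Ω` with outer measures adding up to `1`.
lemma nullMeasurableSet_prefix (hX : IsUniformDraws X μ) {t : ℕ} (f : Fin t → Fin n) :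
    NullMeasurableSet {ω | ∀ v : Fin t, X v ω = f v} μ := by
  have hn : 0 < n := (X 0 (nonempty_of_isProbabilityMeasure μ).some).pos
  refine nullMeasurableSet_of_sum_measure_le
    (A := fun f : Fin t → Fin n => {ω | ∀ v : Fin t, X v ω = f v})
    (fun ω => ⟨fun v : Fin t => X v ω, fun v => rfl⟩) (le_of_eq ?_) f
  simp only [hX.measure_prefix, sum_const, card_univ, Fintype.card_fun, Fintype.card_fin,
    nsmul_eq_mul, measure_univ, Nat.cast_pow]
  rw [← mul_pow, ← ENNReal.ofReal_natCast, ← ENNReal.ofReal_mul (by positivity),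
    mul_one_div_cancel (by positivity), ENNReal.ofReal_one, one_pow]

lemma nullMeasurableSet_not_collected (hX : IsUniformDraws X μ) (m t : ℕ) :
    NullMeasurableSet {ω | ¬Collected m (X · ω) t} μ := by
  rw [setOf_not_collected_eq]
  exact Finset.nullMeasurableSet_biUnion _ fun f _ => hX.nullMeasurableSet_prefix f

lemma measure_not_collected (hX : IsUniformDraws X μ) (m t : ℕ) :
    μ {ω | ¬Collected m (X · ω) t} = ENNReal.ofReal (missCount m n t / (n : ℝ) ^ t) := by
  rw [setOf_not_collected_eq,
    measure_biUnion_finset₀ ?_ fun f _ => hX.nullMeasurableSet_prefix f]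
  · simp only [hX.measure_prefix, sum_const, nsmul_eq_mul]
    rw [← ENNReal.ofReal_pow (by positivity), ← ENNReal.ofReal_natCast,
      ← ENNReal.ofReal_mul (by positivity), missCount, one_div_pow, mul_one_div]
  · intro f _ g _ hfg
    refine Disjoint.aedisjoint (Set.disjoint_left.2 fun ω hf hg => hfg (funext fun v => ?_))
    exact (hf v).symm.trans (hg v)

lemma ae_exists_collected (hX : IsUniformDraws X μ)
    (hfin : ∑' t, ENNReal.ofReal (missCount m n t / (n : ℝ) ^ t) ≠ ∞) :
    ∀ᵐ ω ∂μ, ∃ t, Collected m (X · ω) t := by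
  rw [ae_iff]
  push Not
  refine nonpos_iff_eq_zero.1 (ge_of_tendsto' (ENNReal.tendsto_atTop_zero_of_tsum_ne_top hfin)
    fun t => ?_)
  rw [← hX.measure_not_collected m t]
  exact measure_mono fun ω h => h t

theorem integral_eq_tsum_missCount (hX : IsUniformDraws X μ) {T : Ω → ℕ}
    (hT : ∀ ω, T ω = sInf {t | Collected m (X · ω) t})
    (hfin : ∑' t, ENNReal.ofReal (missCount m n t / (n : ℝ) ^ t) ≠ ∞) :
    ∫ ω, (T ω : ℝ) ∂μ = (∑' t, ENNReal.ofReal (missCount m n t / (n : ℝ) ^ t)).toReal := by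
  -- where collection never completes, `T = sInf ∅ = 0`; this event is null
  have hlt : ∀ t, {ω | t < T ω} =ᵐ[μ] {ω | ¬Collected m (X · ω) t} := fun t => by
    filter_upwards [hX.ae_exists_collected hfin] with ω hω
    simp only [hT]
    exact propext (lt_sInf_collected_iff hω)
  have hnm : ∀ t, NullMeasurableSet {ω | t < T ω} μ := fun t =>
    (hX.nullMeasurableSet_not_collected m t).congr (hlt t).symm
  rw [integral_eq_lintegral_of_nonneg_ae (.of_forall fun ω => Nat.cast_nonneg _)
    (measurable_from_nat.comp_aemeasurable
      (aemeasurable_of_nullMeasurableSet_lt hnm)).aestronglyMeasurable]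
  simp_rw [ENNReal.ofReal_natCast]
  rw [lintegral_natCast_eq_tsum_measure_lt hnm]
  simp_rw [measure_congr (hlt _), hX.measure_not_collected]

end IsUniformDraws

theorem stmt8_general
    (n : ℕ) (m : ℕ)
    (Ω : Type*) [MeasurableSpace Ω] (μ : Measure Ω) [IsProbabilityMeasure μ]
    (X : ℕ → Ω → Fin n)
    (hindep : iIndepFun (m := fun _ => (⊤ : MeasurableSpace (Fin n))) X μ)
    (hdist : ∀ t i, μ {ω | X t ω = i} = ENNReal.ofReal (1 / (n : ℝ)))
    (T : Ω → ℕ)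
    (hT : ∀ ω, T ω = sInf {t : ℕ | ∀ i : Fin n,
      m ≤ ((Finset.range t).filter (fun u => X u ω = i)).card}) :
    ∫ ω, (T ω : ℝ) ∂μ
      = n * ∫ x in Set.Ioi (0 : ℝ), (1 - (1 - truncExp m x * Real.exp (-x)) ^ n) := by
  have hn : 0 < n := (X 0 (nonempty_of_isProbabilityMeasure μ).some).pos
  rw [IsUniformDraws.integral_eq_tsum_missCount ⟨hindep, hdist⟩ hT
      (tsum_missCount_div_pow_ne_top m hn),
    natCast_mul_integral_one_sub_one_sub_pow m hn]

/-- uniform coupon collector's brotherhood: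
`E[T_n(m)] = n ∫_0^∞ [ 1 - (1 - S_m(x) e^{-x})^n ] dx`. -/
theorem stmt8
    (n : ℕ) (hn : 1 ≤ n) (m : ℕ) (hm : 1 ≤ m)
    (Ω : Type*) [MeasurableSpace Ω] (μ : Measure Ω) [IsProbabilityMeasure μ]
    (X : ℕ → Ω → Fin n)
    (hindep : iIndepFun (m := fun _ => (⊤ : MeasurableSpace (Fin n))) X μ)
    (hdist : ∀ t i, μ {ω | X t ω = i} = ENNReal.ofReal (1 / (n : ℝ)))
    (T : Ω → ℕ)
    (hT : ∀ ω, T ω = sInf {t : ℕ | ∀ i : Fin n,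
      m ≤ ((Finset.range t).filter (fun u => X u ω = i)).card}) :
    ∫ ω, (T ω : ℝ) ∂μ
      = n * ∫ x in Set.Ioi (0 : ℝ), (1 - (1 - truncExp m x * Real.exp (-x)) ^ n) :=
  stmt8_general n m Ω μ X hindep hdist T hT
end

section
/- In the random annex code, the expected number of information packets in a fixed extended generation G_i (of size g = h + l) that participate in no other generation equals h(1-π)^{n-1} with π = l/((n-1)h); and the expected number of packets of G_i participating in at least two generations equals l + h[1 - (1-π)^{n-1}]. -/
/-!
On the almost sure event that `R i` is an `l`-subset of the complement of `B i`, every annex packet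
of `G i` also lies in its own base generation, so the packets of `G i` lying in no other generation
are exactly the packets of `B i` missed by all the other annexes. A uniform `l`-subset of an
`m`-set misses a given point with probability `C(m-1, l) / C(m, l) = 1 - l/m`, here `1 - π`, and
the `n - 1` annexes are independent. Integrating the count packet by packet gives `h (1 - π)^(n-1)`;
the second count is the complementary one in `G i`, which has `h + l` packets.
-/

open MeasureTheory ProbabilityTheory Finset Function
open scoped ENNReal

theorem Nat.choose_pred_div_choose {m l : ℕ} (hl : l ≤ m) :
    ((m - 1).choose l : ℝ) / m.choose l = 1 - l / m := by
  rcases m with _ | k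
  · obtain rfl : l = 0 := by omega
    simp
  have hk : ((k + 1).choose l : ℝ) * ((k + 1 : ℕ) - l : ℝ) = k.choose l * (k + 1 : ℕ) := by
    rw [← Nat.cast_sub hl]
    exact_mod_cast (Nat.choose_mul_succ_eq k l).symm
  have hpos : ((k + 1).choose l : ℝ) ≠ 0 := by exact_mod_cast (Nat.choose_pos hl).ne'
  rw [Nat.add_sub_cancel, div_eq_iff hpos]
  field_simp
  push_cast at hk ⊢
  linarith

section UniformSubset

variable {Ω α : Type*} [MeasurableSpace Ω] {μ : Measure Ω}

def IsUniformSubset [DecidableEq α] (μ : Measure Ω) (X : Ω → Finset α) (C : Finset α) (l : ℕ) :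
    Prop :=
  ∀ S, μ {ω | X ω = S} = if #S = l ∧ S ⊆ C then ((#C).choose l : ℝ≥0∞)⁻¹ else 0

namespace IsUniformSubset

variable [DecidableEq α] {X : Ω → Finset α} {C : Finset α} {l : ℕ}

theorem ae_card_eq_and_subset [Countable α] (hX : IsUniformSubset μ X C l) :
    ∀ᵐ ω ∂μ, #(X ω) = l ∧ X ω ⊆ C := by
  have hnull (S : Finset α) : μ {ω | X ω = S ∧ ¬(#S = l ∧ S ⊆ C)} = 0 := by
    by_cases hS : #S = l ∧ S ⊆ C
    · simp [hS]
    · have hfibre := hX S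
      rw [if_neg hS] at hfibre
      exact measure_mono_null (fun ω hω => hω.1) hfibre
  rw [ae_iff]
  refine measure_mono_null (fun ω hω => ?_) (measure_iUnion_null hnull)
  exact Set.mem_iUnion.2 ⟨X ω, rfl, hω⟩

variable [DiscreteMeasurableSpace Ω] [Fintype α]

theorem measure_notMem (hX : IsUniformSubset μ X C l) {p : α} (hp : p ∈ C) :
    μ {ω | p ∉ X ω} = ((#C - 1).choose l : ℝ≥0∞) * ((#C).choose l : ℝ≥0∞)⁻¹ := by
  have hfibres : {ω | p ∉ X ω} = X ⁻¹' ↑({S | p ∉ S} : Finset (Finset α)) := by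
    ext; simp
  rw [hfibres, ← sum_measure_preimage_singleton _ fun _ _ => .of_discrete]
  simp only [Set.preimage, Set.mem_singleton_iff]
  rw [sum_congr rfl fun S _ => hX S, ← sum_filter, sum_const, nsmul_eq_mul]
  have hsupport : filter (fun S => #S = l ∧ S ⊆ C) {S | p ∉ S} = powersetCard l (C.erase p) := by
    ext S
    simp only [mem_filter, mem_univ, true_and, mem_powersetCard, subset_erase]
    tauto
  rw [hsupport, card_powersetCard, card_erase_of_mem hp]

theorem measureReal_notMem (hX : IsUniformSubset μ X C l) (hl : l ≤ #C) {p : α}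
    (hp : p ∈ C) : μ.real {ω | p ∉ X ω} = 1 - l / #C := by
  rw [measureReal_def, hX.measure_notMem hp, ENNReal.toReal_mul, ENNReal.toReal_inv]
  simp only [ENNReal.toReal_natCast]
  rw [← div_eq_mul_inv, Nat.choose_pred_div_choose hl]

end IsUniformSubset

theorem ProbabilityTheory.iIndepFun.measureReal_forall_ne_notMem [DiscreteMeasurableSpace Ω]
    [Fintype α] [DecidableEq α] {ι : Type*} [Fintype ι] [DecidableEq ι] {X : ι → Ω → Finset α}
    (hind : iIndepFun (m := fun _ => ⊤) X μ) {C : ι → Finset α} {k l : ℕ}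
    (hX : ∀ j, IsUniformSubset μ (X j) (C j) l) (hC : ∀ j, #(C j) = k) (hl : l ≤ k)
    {i : ι} {p : α} (hp : ∀ j, j ≠ i → p ∈ C j) :
    μ.real {ω | ∀ j, j ≠ i → p ∉ X j ω} = (1 - l / k) ^ (Fintype.card ι - 1) := by
  have hinter : {ω | ∀ j, j ≠ i → p ∉ X j ω} = ⋂ j ∈ univ.erase i, X j ⁻¹' {S | p ∉ S} := by
    ext; simp
  rw [hinter, measureReal_def, hind.measure_inter_preimage_eq_mul _ fun _ _ => trivial,
    ENNReal.toReal_prod]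
  calc ∏ j ∈ univ.erase i, (μ {ω | p ∉ X j ω}).toReal
      = ∏ j ∈ univ.erase i, (1 - l / k : ℝ) := prod_congr rfl fun j hj => by
        rw [← measureReal_def, (hX j).measureReal_notMem (hC j ▸ hl) (hp j (ne_of_mem_erase hj)),
          hC]
    _ = _ := by rw [prod_const, card_erase_of_mem (mem_univ i), card_univ]

end UniformSubset

theorem integral_card_filter {Ω α : Type*} [MeasurableSpace Ω] [DiscreteMeasurableSpace Ω]
    {μ : Measure Ω} [IsFiniteMeasure μ] (s : Finset α) (P : α → Ω → Prop)
    [∀ ω, DecidablePred (P · ω)] :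
    ∫ ω, (#(s.filter (P · ω)) : ℝ) ∂μ = ∑ a ∈ s, μ.real {ω | P a ω} := by
  have hindicator (ω : Ω) :
      (#(s.filter (P · ω)) : ℝ) = ∑ a ∈ s, {ω | P a ω}.indicator 1 ω := by
    rw [card_filter, Nat.cast_sum]
    simp only [Set.indicator_apply, Set.mem_ofPred_eq, Pi.one_apply, Nat.cast_ite, Nat.cast_one,
      Nat.cast_zero]
  simp_rw [hindicator]
  rw [integral_finsetSum _ fun a _ => (integrable_const 1).indicator .of_discrete]
  exact sum_congr rfl fun a _ => integral_indicator_one .of_discrete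

theorem filter_union_forall_ne_notMem {α ι : Type*} [DecidableEq α] {B R : ι → Finset α}
    (hBdisj : Pairwise (Disjoint on B)) (hBcover : ∀ p, ∃ i, p ∈ B i) {i : ι}
    (hRi : Disjoint (R i) (B i)) [DecidablePred fun p => ∀ j, j ≠ i → p ∉ B j ∪ R j]
    [DecidablePred fun p => ∀ j, j ≠ i → p ∉ R j] :
    (B i ∪ R i).filter (fun p => ∀ j, j ≠ i → p ∉ B j ∪ R j)
      = (B i).filter (fun p => ∀ j, j ≠ i → p ∉ R j) := by
  ext p
  simp only [mem_filter, mem_union, not_or]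
  constructor
  · rintro ⟨hp | hp, hout⟩
    · exact ⟨hp, fun j hj => (hout j hj).2⟩
    · obtain ⟨r, hr⟩ := hBcover p
      have hri : r ≠ i := by rintro rfl; exact disjoint_left.1 hRi hp hr
      exact absurd hr (hout r hri).1
  · rintro ⟨hp, hout⟩
    exact ⟨Or.inl hp, fun j hj => ⟨disjoint_left.1 (hBdisj hj.symm) hp, hout j hj⟩⟩

theorem card_filter_exists_ne_mem_add_card_filter_forall_ne_notMem {α ι : Type*}
    (G : Finset α) (S : ι → Finset α) (i : ι) [DecidablePred fun p => ∃ j, j ≠ i ∧ p ∈ S j]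
    [DecidablePred fun p => ∀ j, j ≠ i → p ∉ S j] :
    #(G.filter fun p => ∃ j, j ≠ i ∧ p ∈ S j) + #(G.filter fun p => ∀ j, j ≠ i → p ∉ S j)
      = #G := by
  rw [← card_filter_add_card_filter_not (s := G) fun p => ∃ j, j ≠ i ∧ p ∈ S j]
  congr 2
  exact filter_congr fun p _ => by simp

theorem stmt14_general
    (n h l N : ℕ) (hN : N = n * h) (hl : l ≤ N - h)
    (B : Fin n → Finset (Fin N)) (hBcard : ∀ i, (B i).card = h)
    (hBdisj : ∀ i j, i ≠ j → Disjoint (B i) (B j))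
    (hBcover : ∀ p : Fin N, ∃ i, p ∈ B i)
    (μ : @Measure (Fin n → Finset (Fin N)) ⊤) (hprob : IsProbabilityMeasure μ)
    (hindep : iIndepFun (m := fun _ : Fin n => (⊤ : MeasurableSpace (Finset (Fin N))))
      (fun i (R : Fin n → Finset (Fin N)) => R i) μ)
    (hunif : ∀ (i : Fin n) (S : Finset (Fin N)),
      μ {R | R i = S}
        = if S.card = l ∧ Disjoint S (B i)
            then (Nat.choose (N - h) l : ENNReal)⁻¹ else 0)
    (i : Fin n)
    (π : ℝ) (hπ : π = (l : ℝ) / (((n : ℝ) - 1) * h)) :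
    (∫ R, (((B i ∪ R i).filter
        (fun p => ∀ j : Fin n, j ≠ i → p ∉ B j ∪ R j)).card : ℝ) ∂μ)
      = h * (1 - π) ^ (n - 1) ∧
    (∫ R, (((B i ∪ R i).filter
        (fun p => ∃ j : Fin n, j ≠ i ∧ p ∈ B j ∪ R j)).card : ℝ) ∂μ)
      = l + h * (1 - (1 - π) ^ (n - 1)) := by
  let _ : MeasurableSpace (Fin n → Finset (Fin N)) := ⊤
  have hcompl (j : Fin n) : #(B j)ᶜ = N - h := by rw [card_compl, Fintype.card_fin, hBcard]
  have hπ' : π = l / (N - h : ℕ) := by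
    rw [hπ, hN, ← Nat.sub_one_mul, Nat.cast_mul, Nat.cast_pred i.pos]
  have hX (j : Fin n) : IsUniformSubset μ (· j) (B j)ᶜ l := fun S => by
    rw [hunif, hcompl]
    simp only [subset_compl_iff_disjoint_right]
  have hgood := (hX i).ae_card_eq_and_subset
  have havoid (p : Fin N) (hp : p ∈ B i) :
      μ.real {R | ∀ j, j ≠ i → p ∉ R j} = (1 - π) ^ (n - 1) := by
    rw [hindep.measureReal_forall_ne_notMem hX hcompl hl
      fun j hj => mem_compl.2 (disjoint_left.1 (hBdisj i j hj.symm) hp), Fintype.card_fin, hπ']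
  have hisolated : ∫ R, (#((B i ∪ R i).filter fun p => ∀ j, j ≠ i → p ∉ B j ∪ R j) : ℝ) ∂μ
      = h * (1 - π) ^ (n - 1) := by
    rw [integral_congr_ae (hgood.mono fun R hR => congrArg (fun s => (#s : ℝ))
      (filter_union_forall_ne_notMem hBdisj hBcover (subset_compl_iff_disjoint_right.1 hR.2))),
      integral_card_filter, sum_congr rfl havoid, sum_const, hBcard, nsmul_eq_mul]
  have hcount : ∀ᵐ R ∂μ, (#((B i ∪ R i).filter fun p => ∃ j, j ≠ i ∧ p ∈ B j ∪ R j) : ℝ)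
      = h + l - #((B i ∪ R i).filter fun p => ∀ j, j ≠ i → p ∉ B j ∪ R j) := by
    filter_upwards [hgood] with R hR
    rw [eq_sub_iff_add_eq, ← Nat.cast_add,
      card_filter_exists_ne_mem_add_card_filter_forall_ne_notMem,
      card_union_of_disjoint (subset_compl_iff_disjoint_right.1 hR.2).symm, hBcard, hR.1]
    norm_cast
  refine ⟨hisolated, ?_⟩
  rw [integral_congr_ae hcount, integral_sub (integrable_const _) .of_finite, integral_const,
    probReal_univ, hisolated]
  ring

/-- in the random annex code, the expected number of packets of a
fixed extended generation `G i = B i ∪ R i` that participate in no other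
generation equals `h(1-π)^{n-1}`, and the expected number of its packets
participating in at least two generations equals `l + h[1 - (1-π)^{n-1}]`,
where `π = l/((n-1)h)`. -/
theorem stmt14
    (n h l N : ℕ) (hn : 2 ≤ n) (hh : 1 ≤ h) (hN : N = n * h) (hl : l ≤ N - h)
    (B : Fin n → Finset (Fin N)) (hBcard : ∀ i, (B i).card = h)
    (hBdisj : ∀ i j, i ≠ j → Disjoint (B i) (B j))
    (hBcover : ∀ p : Fin N, ∃ i, p ∈ B i)
    (μ : @Measure (Fin n → Finset (Fin N)) ⊤) (hprob : IsProbabilityMeasure μ)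
    (hindep : iIndepFun (m := fun _ : Fin n => (⊤ : MeasurableSpace (Finset (Fin N))))
      (fun i (R : Fin n → Finset (Fin N)) => R i) μ)
    (hunif : ∀ (i : Fin n) (S : Finset (Fin N)),
      μ {R | R i = S}
        = if S.card = l ∧ Disjoint S (B i)
            then (Nat.choose (N - h) l : ENNReal)⁻¹ else 0)
    (hl0 : 0 < l)
    (i : Fin n)
    (π : ℝ) (hπ : π = (l : ℝ) / (((n : ℝ) - 1) * h)) :
    (∫ R, (((B i ∪ R i).filter
        (fun p => ∀ j : Fin n, j ≠ i → p ∉ B j ∪ R j)).card : ℝ) ∂μ)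
      = h * (1 - π) ^ (n - 1) ∧
    (∫ R, (((B i ∪ R i).filter
        (fun p => ∃ j : Fin n, j ≠ i ∧ p ∈ B j ∪ R j)).card : ℝ) ∂μ)
      = l + h * (1 - (1 - π) ^ (n - 1)) :=
  stmt14_general n h l N hN hl B hBcard hBdisj hBcover μ hprob hindep hunif i π hπ
end

section
/- In the random annex code, the probability that two distinct extended generations G_i and G_j overlap (share at least one packet) equals 1 - multinomial(N-2h; l, l, N-2h-2l)/C(N-h, l)², where multinomial(N-2h; l, l, N-2h-2l) = (N-2h)!/(l! l! (N-2h-2l)!). -/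
open MeasureTheory ProbabilityTheory Finset

/-! By independence, the probability that `G i` and `G j` are disjoint is a sum over the pairs
`(S, T)` of values of `(R i, R j)`, and every admissible pair has probability `C(N-h, l)⁻²`.
Given `Disjoint (B i) (B j)`, the admissible pairs with `B i ∪ S` and `B j ∪ T` disjoint are
exactly the pairs of disjoint `l`-subsets of the complement of `B i ∪ B j`, a set of size `N - 2h`;
there are `C(N-2h, l) · C(N-2h-l, l) = (N-2h)! / (l! l! (N-2h-2l)!)` of them. -/

theorem ProbabilityTheory.IndepFun.measure_mem_finset_eq_sum {Ω α β : Type*}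
    {mΩ : MeasurableSpace Ω} {mα : MeasurableSpace α} {mβ : MeasurableSpace β}
    [MeasurableSingletonClass α] [MeasurableSingletonClass β] {μ : Measure Ω}
    {X : Ω → α} {Y : Ω → β} (hXY : IndepFun X Y μ) (hX : Measurable X) (hY : Measurable Y)
    (E : Finset (α × β)) :
    μ {ω | (X ω, Y ω) ∈ E} = ∑ p ∈ E, μ {ω | X ω = p.1} * μ {ω | Y ω = p.2} := by
  have hfiber (p : α × β) :
      (fun ω ↦ (X ω, Y ω)) ⁻¹' {p} = X ⁻¹' {p.1} ∩ Y ⁻¹' {p.2} := by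
    ext ω; simp [Prod.ext_iff]
  change μ ((fun ω ↦ (X ω, Y ω)) ⁻¹' E) = _
  rw [← sum_measure_preimage_singleton E fun p _ ↦ (hfiber p) ▸
    (hX (measurableSet_singleton _)).inter (hY (measurableSet_singleton _))]
  refine sum_congr rfl fun p _ ↦ ?_
  rw [hfiber, hXY.measure_inter_preimage_eq_mul _ _ (measurableSet_singleton _)
    (measurableSet_singleton _)]
  rfl

theorem card_filter_disjoint_powersetCard {α : Type*} [DecidableEq α] (A : Finset α) (l : ℕ) :
    #{p ∈ A.powersetCard l ×ˢ A.powersetCard l | Disjoint p.1 p.2}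
      = (#A).choose l * (#A - l).choose l := by
  rw [card_filter, sum_product]
  have hfiber {S} (hS : S ∈ A.powersetCard l) :
      ∑ T ∈ A.powersetCard l, (if Disjoint S T then 1 else 0) = (#A - l).choose l := by
    rw [← card_filter]
    have : {T ∈ A.powersetCard l | Disjoint S T} = (A \ S).powersetCard l := by
      ext T; simp [mem_powersetCard, subset_sdiff, disjoint_comm, _root_.and_right_comm]
    rw [this, card_powersetCard, card_sdiff_of_subset (mem_powersetCard.1 hS).1,
      (mem_powersetCard.1 hS).2]
  rw [sum_congr rfl fun S hS ↦ hfiber hS, sum_const, card_powersetCard, smul_eq_mul]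

open Nat in
theorem Nat.cast_choose_mul_choose {K : Type*} [Field K] [CharZero K] {a b m : ℕ}
    (h : a + b ≤ m) :
    (m.choose a * (m - a).choose b : K) = m ! / (a ! * b ! * (m - a - b)!) := by
  rw [Nat.cast_choose K (by omega : a ≤ m), Nat.cast_choose K (by omega : b ≤ m - a)]
  have : ((m - a)! : K) ≠ 0 := Nat.cast_ne_zero.2 (factorial_ne_zero _)
  field_simp

theorem disjoint_union_union_iff {α : Type*} [Fintype α] [DecidableEq α]
    {B₁ B₂ S T : Finset α}
    (hB : Disjoint B₁ B₂) :
    (Disjoint (B₁ ∪ S) (B₂ ∪ T) ∧ Disjoint S B₁ ∧ Disjoint T B₂)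
      ↔ (S ⊆ (B₁ ∪ B₂)ᶜ ∧ T ⊆ (B₁ ∪ B₂)ᶜ) ∧ Disjoint S T := by
  simp only [subset_compl_iff_disjoint_right, disjoint_union_left, disjoint_union_right, hB,
    true_and, disjoint_comm (a := B₁)]
  tauto

theorem measure_disjoint_union_eq {α Ω : Type*} [Fintype α] [DecidableEq α]
    {mΩ : MeasurableSpace Ω} {mα : MeasurableSpace (Finset α)}
    [MeasurableSingletonClass (Finset α)] {μ : Measure Ω} {X Y : Ω → Finset α}
    (hXY : IndepFun X Y μ) (hX : Measurable X) (hY : Measurable Y) {B₁ B₂ : Finset α}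
    (hB : Disjoint B₁ B₂) {l : ℕ} {c₁ c₂ : ENNReal}
    (hX_law : ∀ S, μ {ω | X ω = S} = if #S = l ∧ Disjoint S B₁ then c₁ else 0)
    (hY_law : ∀ T, μ {ω | Y ω = T} = if #T = l ∧ Disjoint T B₂ then c₂ else 0) :
    μ {ω | Disjoint (B₁ ∪ X ω) (B₂ ∪ Y ω)}
      = ((#(B₁ ∪ B₂)ᶜ).choose l * (#(B₁ ∪ B₂)ᶜ - l).choose l : ℕ) * (c₁ * c₂) := by
  rw [← card_filter_disjoint_powersetCard,
    show {ω | Disjoint (B₁ ∪ X ω) (B₂ ∪ Y ω)}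
      = {ω | (X ω, Y ω) ∈ ({p | Disjoint (B₁ ∪ p.1) (B₂ ∪ p.2)} : Finset _)} by simp,
    hXY.measure_mem_finset_eq_sum hX hY]
  simp_rw [hX_law, hY_law, ite_zero_mul_ite_zero, ← sum_filter, filter_filter, sum_const,
    nsmul_eq_mul]
  congr 3
  ext ⟨S, T⟩
  simp only [mem_filter, mem_univ, mem_product, mem_powersetCard, true_and]
  have := disjoint_union_union_iff hB (S := S) (T := T)
  tauto

theorem stmt15_general
    (n h l N : ℕ)
    (B : Fin n → Finset (Fin N)) (hBcard : ∀ i, (B i).card = h)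
    (hBdisj : ∀ i j, i ≠ j → Disjoint (B i) (B j))
    (μ : @Measure (Fin n → Finset (Fin N)) ⊤) (hprob : IsProbabilityMeasure μ)
    (hindep : iIndepFun (m := fun _ : Fin n => (⊤ : MeasurableSpace (Finset (Fin N))))
      (fun i (R : Fin n → Finset (Fin N)) => R i) μ)
    (hunif : ∀ (i : Fin n) (S : Finset (Fin N)),
      μ {R | R i = S}
        = if S.card = l ∧ Disjoint S (B i)
            then (Nat.choose (N - h) l : ENNReal)⁻¹ else 0)
    (hll : 2 * l ≤ N - 2 * h)
    (i j : Fin n) (hij : i ≠ j) :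
    μ {R | ¬ Disjoint (B i ∪ R i) (B j ∪ R j)}
      = ENNReal.ofReal (1 -
          (((N - 2 * h).factorial : ℝ)
              / ((l.factorial : ℝ) * (l.factorial : ℝ) * ((N - 2 * h - 2 * l).factorial : ℝ)))
            / ((Nat.choose (N - h) l : ℝ)) ^ 2) := by
  have hcard : #(B i ∪ B j)ᶜ = N - 2 * h := by
    rw [card_compl, card_union_of_disjoint (hBdisj i j hij), hBcard, hBcard, Fintype.card_fin,
      two_mul]
  have hdisjoint := measure_disjoint_union_eq (hindep.indepFun hij)
    (fun _ _ ↦ MeasurableSpace.measurableSet_top) (fun _ _ ↦ MeasurableSpace.measurableSet_top)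
    (hBdisj i j hij) (hunif i) (hunif j)
  have hC : 0 < (N - h).choose l := Nat.choose_pos (by omega)
  rw [show N - 2 * h - 2 * l = N - 2 * h - l - l by omega,
    ← Nat.cast_choose_mul_choose (by omega), ENNReal.ofReal_sub _ (by positivity),
    ENNReal.ofReal_one, ENNReal.ofReal_div_of_pos (by positivity), ← Set.compl_ofPred,
    prob_compl_eq_one_sub MeasurableSpace.measurableSet_top, hdisjoint, hcard]
  norm_cast
  rw [Nat.cast_pow, div_eq_mul_inv, ENNReal.inv_pow, sq]

/-- in the random annex code, two distinct extended generations
`G i` and `G j` overlap with probability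
`1 - multinomial(N-2h; l, l, N-2h-2l)/C(N-h, l)²`. -/
theorem stmt15
    (n h l N : ℕ) (hn : 2 ≤ n) (hh : 1 ≤ h) (hN : N = n * h) (hl : l ≤ N - h)
    (B : Fin n → Finset (Fin N)) (hBcard : ∀ i, (B i).card = h)
    (hBdisj : ∀ i j, i ≠ j → Disjoint (B i) (B j))
    (hBcover : ∀ p : Fin N, ∃ i, p ∈ B i)
    (μ : @Measure (Fin n → Finset (Fin N)) ⊤) (hprob : IsProbabilityMeasure μ)
    (hindep : iIndepFun (m := fun _ : Fin n => (⊤ : MeasurableSpace (Finset (Fin N))))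
      (fun i (R : Fin n → Finset (Fin N)) => R i) μ)
    (hunif : ∀ (i : Fin n) (S : Finset (Fin N)),
      μ {R | R i = S}
        = if S.card = l ∧ Disjoint S (B i)
            then (Nat.choose (N - h) l : ENNReal)⁻¹ else 0)
    (hll : 2 * l ≤ N - 2 * h)
    (i j : Fin n) (hij : i ≠ j) :
    μ {R | ¬ Disjoint (B i ∪ R i) (B j ∪ R j)}
      = ENNReal.ofReal (1 -
          (((N - 2 * h).factorial : ℝ)
              / ((l.factorial : ℝ) * (l.factorial : ℝ) * ((N - 2 * h - 2 * l).factorial : ℝ)))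
            / ((Nat.choose (N - h) l : ℝ)) ^ 2) :=
  stmt15_general n h l N B hBcard hBdisj μ hprob hindep hunif hll i j hij
end

section
/- In the random annex code, for any set I of s generation indices and any index j ∉ I, the expected size of the intersection of the union ∪_{i∈I} G_i with G_j equals Ω(s) = g(1 - (1-π)^s) + s h π (1-π)^s, where g = h + l and π = l/((n-1)h). -/
/-! Linearity of expectation over packets. A packet `p ∈ B k` lies in `(∪_{i∈I} G i) ∩ G j` iff
`p ∈ R j` (when `k ∈ I`), `p ∈ R i` for some `i ∈ I` (when `k = j`), or both (otherwise).
An annex contains a given packet outside its base with probability `π`, because a fraction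
`l / (N - h)` of the `l`-subsets of `(B i)ᶜ` contain it; by independence the three events then have
probabilities `π`, `1 - (1 - π)^s` and `π (1 - (1 - π)^s)`. Summing `h` times these over the
`s`, `1` and `n - s - 1` generations of each kind gives `Ω(s)`. -/

open MeasureTheory ProbabilityTheory Finset Function

lemma card_mul_card_filter_mem_powersetCard {α : Type*} [DecidableEq α] {t : Finset α} {p : α}
    (hp : p ∈ t) (l : ℕ) :
    #t * #{S ∈ t.powersetCard l | p ∈ S} = l * (#t).choose l := by
  cases l with
  | zero => simp [powersetCard_zero, filter_singleton]
  | succ k =>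
    have hcount := card_filter_powersetCard_subset {p} t (k + 1) (by simpa) (by simp)
    simp only [singleton_subset_iff, card_singleton, add_tsub_cancel_right] at hcount
    obtain ⟨m, hm⟩ : ∃ m, #t = m + 1 := ⟨#t - 1, by have := card_pos.2 ⟨p, hp⟩; omega⟩
    rw [hcount, hm, add_tsub_cancel_right, Nat.add_one_mul_choose_eq, mul_comm]

lemma sum_ite_mem_ite_eq {ι : Type*} [Fintype ι] [DecidableEq ι] {I : Finset ι} {j : ι} (hj : j ∉ I)
    (a b c : ℝ) :
    ∑ k, (if k ∈ I then a else if k = j then b else c)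
      = #I * a + b + ((Fintype.card ι : ℝ) - #I - 1) * c := by
  have hsplit : ∀ k, (if k ∈ I then a else if k = j then b else c)
      = c + (if k ∈ I then a - c else 0) + (if k = j then b - c else 0) := by
    intro k
    split_ifs <;> simp_all
  simp only [hsplit, sum_add_distrib, sum_const, sum_ite_mem, univ_inter, sum_ite_eq', mem_univ,
    if_true, card_univ, nsmul_eq_mul]
  ring

section RandomSets

variable {Ω ι α : Type*} {mΩ : MeasurableSpace Ω} [DiscreteMeasurableSpace Ω] {μ : Measure Ω}

lemma integral_card_eq_sum_measureReal [Fintype α] [IsFiniteMeasure μ] (Y : Ω → Finset α) :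
    ∫ ω, (#(Y ω) : ℝ) ∂μ = ∑ p, μ.real {ω | p ∈ Y ω} := by
  have hcard : ∀ ω, (#(Y ω) : ℝ) = ∑ p, {ω | p ∈ Y ω}.indicator 1 ω := by
    classical
    simp [Set.indicator_apply]
  simp_rw [hcard]
  rw [integral_finsetSum _ fun p _ => (integrable_const 1).indicator .of_discrete]
  exact sum_congr rfl fun p _ => integral_indicator_one .of_discrete

lemma measureReal_mem_of_uniform [IsFiniteMeasure μ] [Fintype α] [DecidableEq α]
    {X : Ω → Finset α} {B : Finset α} {l : ℕ} (hl : l ≤ #Bᶜ)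
    (hunif : ∀ S, μ (X ⁻¹' {S}) =
      if #S = l ∧ Disjoint S B then ((#Bᶜ).choose l : ENNReal)⁻¹ else 0)
    {p : α} (hp : p ∉ B) :
    μ.real {ω | p ∈ X ω} = l / #Bᶜ := by
  have hfiber : ∀ S, μ.real (X ⁻¹' {S}) =
      if S ∈ Bᶜ.powersetCard l then ((#Bᶜ).choose l : ℝ)⁻¹ else 0 := by
    intro S
    simp only [measureReal_def, hunif, mem_powersetCard, subset_compl_iff_disjoint_right, and_comm]
    split_ifs <;> simp
  have hp' : p ∈ Bᶜ := mem_compl.2 hp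
  have hcount : (#Bᶜ * #{S ∈ Bᶜ.powersetCard l | p ∈ S} : ℝ) = l * (#Bᶜ).choose l := by
    exact_mod_cast card_mul_card_filter_mem_powersetCard hp' l
  have hchoose : ((#Bᶜ).choose l : ℝ) ≠ 0 := by exact_mod_cast (Nat.choose_pos hl).ne'
  have hB : (#Bᶜ : ℝ) ≠ 0 := by exact_mod_cast (card_pos.2 ⟨p, hp'⟩).ne'
  calc μ.real {ω | p ∈ X ω}
      = ∑ S ∈ univ.filter (p ∈ ·), μ.real (X ⁻¹' {S}) := by
        rw [sum_measureReal_preimage_singleton _ (fun _ _ => .of_discrete)]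
        simp [Set.preimage]
    _ = #{S ∈ Bᶜ.powersetCard l | p ∈ S} * ((#Bᶜ).choose l : ℝ)⁻¹ := by
        simp only [hfiber, sum_ite_mem, sum_const, nsmul_eq_mul]
        congr 3
        ext S; simp [and_comm]
    _ = l / #Bᶜ := by
        field_simp
        linear_combination hcount

variable [IsProbabilityMeasure μ]

section IndependentEvents

variable {β : Type*} {X : ι → Ω → β} {T : Set β} {q : ℝ}

lemma measureReal_forall_notMem_of_iIndepFun
    (hX : iIndepFun (m := fun _ => (⊤ : MeasurableSpace β)) X μ) (K : Finset ι)
    (hq : ∀ i ∈ K, μ.real (X i ⁻¹' T) = q) :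
    μ.real {ω | ∀ i ∈ K, X i ω ∉ T} = (1 - q) ^ #K := by
  have hinter : {ω | ∀ i ∈ K, X i ω ∉ T} = ⋂ i ∈ K, X i ⁻¹' Tᶜ := by ext; simp
  rw [hinter, measureReal_def, hX.meas_biInter (fun i _ => ⟨Tᶜ, trivial, rfl⟩),
    ENNReal.toReal_prod, ← prod_const]
  refine prod_congr rfl fun i hi => ?_
  rw [← measureReal_def, Set.preimage_compl, measureReal_compl .of_discrete, probReal_univ, hq i hi]

lemma measureReal_exists_mem_of_iIndepFun
    (hX : iIndepFun (m := fun _ => (⊤ : MeasurableSpace β)) X μ) (K : Finset ι)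
    (hq : ∀ i ∈ K, μ.real (X i ⁻¹' T) = q) :
    μ.real {ω | ∃ i ∈ K, X i ω ∈ T} = 1 - (1 - q) ^ #K := by
  have hcompl : {ω | ∃ i ∈ K, X i ω ∈ T} = {ω | ∀ i ∈ K, X i ω ∉ T}ᶜ := by ext; simp
  rw [hcompl, measureReal_compl .of_discrete, probReal_univ,
    measureReal_forall_notMem_of_iIndepFun hX K hq]

lemma measureReal_mem_and_exists_mem_of_iIndepFun [DecidableEq ι]
    (hX : iIndepFun (m := fun _ => (⊤ : MeasurableSpace β)) X μ) {K : Finset ι} {j : ι}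
    (hj : j ∉ K) (hq : ∀ i ∈ insert j K, μ.real (X i ⁻¹' T) = q) :
    μ.real {ω | X j ω ∈ T ∧ ∃ i ∈ K, X i ω ∈ T} = q * (1 - (1 - q) ^ #K) := by
  -- inclusion–exclusion, the union being the event for `insert j K`
  have hunion := measureReal_union_add_inter (μ := μ) (s := X j ⁻¹' T)
    (t := {ω | ∃ i ∈ K, X i ω ∈ T}) .of_discrete
  have hjoint : X j ⁻¹' T ∪ {ω | ∃ i ∈ K, X i ω ∈ T} = {ω | ∃ i ∈ insert j K, X i ω ∈ T} := by
    ext; simp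
  rw [hjoint, measureReal_exists_mem_of_iIndepFun hX _ hq, card_insert_of_notMem hj,
    hq j (mem_insert_self j K),
    measureReal_exists_mem_of_iIndepFun hX K fun i hi => hq i (mem_insert_of_mem hi)] at hunion
  change μ.real (X j ⁻¹' T ∩ {ω | ∃ i ∈ K, X i ω ∈ T}) = _
  linear_combination hunion

end IndependentEvents

lemma measureReal_mem_biUnion_inter_union [DecidableEq ι] [DecidableEq α]
    {X : ι → Ω → Finset α} {q : ℝ}
    (hX : iIndepFun (m := fun _ => (⊤ : MeasurableSpace (Finset α))) X μ)
    {B : ι → Finset α} (hB : Pairwise (Disjoint on B))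
    (hq : ∀ i p, p ∉ B i → μ.real {ω | p ∈ X i ω} = q)
    {I : Finset ι} {j : ι} (hj : j ∉ I) {k : ι} {p : α} (hp : p ∈ B k) :
    μ.real {ω | p ∈ I.biUnion (fun i => B i ∪ X i ω) ∩ (B j ∪ X j ω)}
      = if k ∈ I then q else if k = j then 1 - (1 - q) ^ #I else q * (1 - (1 - q) ^ #I) := by
  have hnotMem : ∀ i ≠ k, p ∉ B i := fun i hik => disjoint_left.1 (hB hik.symm) hp
  by_cases hkI : k ∈ I
  · have hkj : k ≠ j := fun h => hj (h ▸ hkI)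
    rw [if_pos hkI, ← hq j p (hnotMem j hkj.symm)]
    congr 1
    ext ω
    simpa [hnotMem j hkj.symm] using fun _ => ⟨k, hkI, Or.inl hp⟩
  have hpI : ∀ i ∈ I, p ∉ B i := fun i hi => hnotMem i fun h => hkI (h ▸ hi)
  have hmemU : ∀ ω, p ∈ I.biUnion (fun i => B i ∪ X i ω) ↔ ∃ i ∈ I, p ∈ X i ω := fun ω => by
    simp only [mem_biUnion, mem_union]
    exact exists_congr fun i => and_congr_right fun hi => or_iff_right (hpI i hi)
  rw [if_neg hkI]
  split_ifs with hkj
  · subst hkj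
    rw [← measureReal_exists_mem_of_iIndepFun (T := {S | p ∈ S}) hX I
      fun i hi => hq i p (hpI i hi)]
    congr 1
    ext ω
    simp [hmemU, hp]
  · rw [← measureReal_mem_and_exists_mem_of_iIndepFun (T := {S | p ∈ S}) hX hj
      fun i hi => hq i p (hnotMem i ?_)]
    · congr 1
      ext ω
      simp [hmemU, hnotMem j (Ne.symm hkj), and_comm]
    · rintro rfl
      exact (mem_insert.1 hi).elim (fun h => hkj h) hkI

end RandomSets

/-- in the random annex code, for any set `I` of `s` generation
indices and any `j ∉ I`, the expected size of `(∪_{i∈I} G i) ∩ G j` equals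
`Ω(s) = g(1-(1-π)^s) + s h π (1-π)^s` with `g = h + l`, `π = l/((n-1)h)`. -/
theorem stmt16
    (n h l N : ℕ) (hn : 2 ≤ n) (hh : 1 ≤ h) (hN : N = n * h) (hl : l ≤ N - h)
    (B : Fin n → Finset (Fin N)) (hBcard : ∀ i, (B i).card = h)
    (hBdisj : ∀ i j, i ≠ j → Disjoint (B i) (B j))
    (hBcover : ∀ p : Fin N, ∃ i, p ∈ B i)
    (μ : @Measure (Fin n → Finset (Fin N)) ⊤) (hprob : IsProbabilityMeasure μ)
    (hindep : iIndepFun (m := fun _ : Fin n => (⊤ : MeasurableSpace (Finset (Fin N))))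
      (fun i (R : Fin n → Finset (Fin N)) => R i) μ)
    (hunif : ∀ (i : Fin n) (S : Finset (Fin N)),
      μ {R | R i = S}
        = if S.card = l ∧ Disjoint S (B i)
            then (Nat.choose (N - h) l : ENNReal)⁻¹ else 0)
    (I : Finset (Fin n)) (s : ℕ) (hs : I.card = s) (j : Fin n) (hj : j ∉ I)
    (π : ℝ) (hπ : π = (l : ℝ) / (((n : ℝ) - 1) * h)) :
    (∫ R, (((I.biUnion (fun i => B i ∪ R i)) ∩ (B j ∪ R j)).card : ℝ) ∂μ)
      = ((h : ℝ) + l) * (1 - (1 - π) ^ s) + (s : ℝ) * h * π * (1 - π) ^ s := by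
  have := hprob
  have hcompl : ∀ i, #(B i)ᶜ = N - h := fun i => by rw [card_compl, Fintype.card_fin, hBcard]
  have hNh : ((N - h : ℕ) : ℝ) = ((n : ℝ) - 1) * h := by
    rw [hN, Nat.cast_sub (Nat.le_mul_of_pos_left h (by omega)), Nat.cast_mul]
    ring
  have hq : ∀ i p, p ∉ B i → μ.real {R | p ∈ R i} = π := fun i p hp => by
    refine (measureReal_mem_of_uniform (μ := μ) (X := fun (R : Fin n → Finset (Fin N)) => R i)
      (hcompl i ▸ hl) (fun S => by rw [hcompl i]; exact hunif i S) hp).trans ?_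
    rw [hcompl i, hNh, hπ]
  have hlπ : (l : ℝ) = π * (((n : ℝ) - 1) * h) := by
    rw [hπ, div_mul_cancel₀]
    have hn' : (2 : ℝ) ≤ n := by exact_mod_cast hn
    have hh' : (1 : ℝ) ≤ h := by exact_mod_cast hh
    exact (mul_pos (by linarith) (by linarith)).ne'
  have huniv : (univ : Finset (Fin N)) = univ.biUnion B := .symm <|
    eq_univ_of_forall fun p => mem_biUnion.2 <| (hBcover p).imp fun i hi => ⟨mem_univ i, hi⟩
  calc (∫ R, (((I.biUnion (fun i => B i ∪ R i)) ∩ (B j ∪ R j)).card : ℝ) ∂μ)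
      = ∑ k, ∑ p ∈ B k, μ.real {R | p ∈ I.biUnion (fun i => B i ∪ R i) ∩ (B j ∪ R j)} := by
        rw [integral_card_eq_sum_measureReal, huniv,
          sum_biUnion fun i _ j _ hij => hBdisj i j hij]
    _ = ∑ k, (h : ℝ) * (if k ∈ I then π else if k = j then 1 - (1 - π) ^ s
          else π * (1 - (1 - π) ^ s)) := by
        refine sum_congr rfl fun k _ => ?_
        rw [sum_congr rfl fun p hp =>
          measureReal_mem_biUnion_inter_union hindep hBdisj hq hj hp, sum_const, hBcard, hs,
          nsmul_eq_mul]
    _ = ((h : ℝ) + l) * (1 - (1 - π) ^ s) + (s : ℝ) * h * π * (1 - π) ^ s := by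
        rw [← mul_sum, sum_ite_mem_ite_eq hj, Fintype.card_fin, hs, hlπ]
        ring
end

section
/- In the random annex code limit n → ∞ with l/h → α and s/n → β (h fixed), the expected overlap Ω(s) = g(1-(1-π)^s) + shπ(1-π)^s converges to h[1 + α - (1 + α - αβ)e^{-αβ}], where g = h+l and π = l/((n-1)h). -/
/-!
Since `π → 0` and `s π → αβ`, we get `s log (1 - π) = s π (1 + o(1)) → -αβ`, so
`(1 - π)^s → e^{-αβ}`, and this holds whether or not `s → ∞`. With `l → hα`, the limit of
`Ω(s) = (h + l)(1 - (1 - π)^s) + (s π) h (1 - π)^s` is then read off term by term.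
-/

open Filter Topology Asymptotics

theorem Real.tendsto_mul_log_one_add_of_tendsto_mul {ι : Type*} {l : Filter ι} {p k : ι → ℝ}
    {c : ℝ} (hp : Tendsto p l (𝓝 0)) (hkp : Tendsto (fun i => k i * p i) l (𝓝 c)) :
    Tendsto (fun i => k i * Real.log (1 + p i)) l (𝓝 c) := by
  have hlog : (fun x : ℝ => Real.log (1 + x) - x) =o[𝓝 0] fun x => x := by
    simpa using (((hasDerivAt_id (0 : ℝ)).const_add 1).log (by norm_num)).isLittleO
  have herr : (fun i => k i * Real.log (1 + p i) - k i * p i) =o[l] fun _ => (1 : ℝ) := by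
    simp_rw [← mul_sub]
    exact ((isBigO_refl k l).mul_isLittleO (hlog.comp_tendsto hp)).trans_isBigO
      (hkp.isBigO_one ℝ)
  simpa using hkp.add ((isLittleO_one_iff ℝ).1 herr)

theorem Real.tendsto_one_add_pow_exp_of_tendsto_mul {ι : Type*} {l : Filter ι} {p : ι → ℝ}
    {k : ι → ℕ} {c : ℝ} (hp : Tendsto p l (𝓝 0)) (hkp : Tendsto (fun i => k i * p i) l (𝓝 c)) :
    Tendsto (fun i => (1 + p i) ^ k i) l (𝓝 (Real.exp c)) := by
  refine ((Real.continuous_exp.tendsto c).comp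
    (Real.tendsto_mul_log_one_add_of_tendsto_mul hp hkp)).congr' ?_
  filter_upwards [hp.eventually (lt_mem_nhds neg_one_lt_zero)] with i hi
  rw [Function.comp_apply, Real.exp_nat_mul, Real.exp_log (by linarith)]

theorem stmt17_general
    (h : ℕ) (hh : 1 ≤ h)
    (l s : ℕ → ℕ) (α β : ℝ)
    (hl : Tendsto (fun n : ℕ => (l n : ℝ) / h) atTop (nhds α))
    (hs : Tendsto (fun n : ℕ => (s n : ℝ) / n) atTop (nhds β))
    (π : ℕ → ℝ) (hπ : ∀ n, π n = (l n : ℝ) / (((n : ℝ) - 1) * h))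
    (W : ℕ → ℝ)
    (hW : ∀ n, W n = ((h : ℝ) + l n) * (1 - (1 - π n) ^ (s n))
        + (s n : ℝ) * h * π n * (1 - π n) ^ (s n)) :
    Tendsto W atTop
      (nhds ((h : ℝ) * (1 + α - (1 + α - α * β) * Real.exp (-(α * β))))) := by
  have hh0 : (h : ℝ) ≠ 0 := by positivity
  have hinv : Tendsto (fun n : ℕ => ((n : ℝ) - 1)⁻¹) atTop (𝓝 0) :=
    (tendsto_atTop_add_const_right _ (-1) tendsto_natCast_atTop_atTop).inv_tendsto_atTop
  have hπ0 : Tendsto π atTop (𝓝 0) := by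
    refine (mul_zero α ▸ hl.mul hinv).congr fun n => ?_
    rw [hπ, mul_comm _ (h : ℝ), ← div_div, div_eq_mul_inv (_ / _)]
  have hsπ : Tendsto (fun n => (s n : ℝ) * π n) atTop (𝓝 (α * β)) := by
    have hn : Tendsto (fun n : ℕ => (n : ℝ) / (n + -1)) atTop (𝓝 1) :=
      tendsto_natCast_div_add_atTop (-1 : ℝ)
    rw [mul_comm α, ← mul_one (β * α)]
    refine ((hs.mul hl).mul hn).congr' ?_
    filter_upwards [eventually_ne_atTop 0] with n hn0
    rw [hπ, ← sub_eq_add_neg]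
    field_simp
  have hE : Tendsto (fun n => (1 - π n) ^ s n) atTop (𝓝 (Real.exp (-(α * β)))) := by
    have hπ0' : Tendsto (fun n => -π n) atTop (𝓝 0) := neg_zero (G := ℝ) ▸ hπ0.neg
    simpa [sub_eq_add_neg] using
      Real.tendsto_one_add_pow_exp_of_tendsto_mul hπ0' (by simpa using hsπ.neg)
  have hlh : Tendsto (fun n => (l n : ℝ)) atTop (𝓝 (h * α)) := by
    simpa [mul_div_cancel₀ _ hh0] using hl.const_mul (h : ℝ)
  convert ((tendsto_const_nhds (x := (h : ℝ))).add hlh |>.mul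
    ((tendsto_const_nhds (x := (1 : ℝ))).sub hE)).add
    ((hsπ.mul_const (h : ℝ)).mul hE) using 1
  · ext n; rw [hW]; ring
  · congr 1; ring

/-- in the random annex code limit `n → ∞` with `l/h → α` and
`s/n → β` (`h` fixed), the expected overlap
`Ω(s) = g(1-(1-π)^s) + s h π (1-π)^s` (with `g = h + l`, `π = l/((n-1)h)`)
converges to `h[1 + α - (1 + α - αβ)e^{-αβ}]`. -/
theorem stmt17
    (h : ℕ) (hh : 1 ≤ h)
    (l s : ℕ → ℕ) (α β : ℝ) (hα : 0 ≤ α) (hβ : β ∈ Set.Icc (0 : ℝ) 1)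
    (hl : Tendsto (fun n : ℕ => (l n : ℝ) / h) atTop (nhds α))
    (hs : Tendsto (fun n : ℕ => (s n : ℝ) / n) atTop (nhds β))
    (π : ℕ → ℝ) (hπ : ∀ n, π n = (l n : ℝ) / (((n : ℝ) - 1) * h))
    (W : ℕ → ℝ)
    (hW : ∀ n, W n = ((h : ℝ) + l n) * (1 - (1 - π n) ^ (s n))
        + (s n : ℝ) * h * π n * (1 - π n) ^ (s n)) :
    Tendsto W atTop
      (nhds ((h : ℝ) * (1 + α - (1 + α - α * β) * Real.exp (-(α * β))))) :=
  stmt17_general h hh l s α β hl hs π hπ W hW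
end

section
/- Let M be the number of i.i.d. uniform vectors from GF(q)^g drawn until g linearly independent ones are obtained, and S_m(x) = ∑_{j=0}^{m-1} x^j/j!. Then E[S_M(x)] < S_g(x) + α_{q,g} q^g (e^{x/q} - S_g(x/q)) for every x > 0, where α_{q,g} = -∑_{k=0}^{g-1} ln(1 - q^{k-g}). -/
open MeasureTheory Finset

/-!
Writing `S_M(x) = ∑_j (x^j/j!) 1[M > j]` and integrating term by term gives
`E[S_M(x)] = ∑_j (x^j/j!) P[M > j]`. The first `g` terms sum to `S_g(x)`, and on the rest the tail
bound replaces `P[M > j]` by `α q^g q^{-j}`, turning `x^j/j!` into `α q^g (x/q)^j/j!`; these sum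
to `α q^g (e^{x/q} - S_g(x/q))`. The inequality is strict because the tail bound is strict at
`j = g`.
-/

theorem integral_sum_range_eq_tsum {Ω : Type*} [MeasurableSpace Ω] {μ : Measure Ω}
    [IsFiniteMeasure μ] {M : Ω → ℕ} (hM : Measurable M) {a : ℕ → ℝ} (ha : Summable a) :
    ∫ ω, ∑ j ∈ range (M ω), a j ∂μ = ∑' j, μ.real {ω | j < M ω} * a j := by
  have hs (j : ℕ) : MeasurableSet {ω | j < M ω} := hM measurableSet_Ioi
  have hsum (ω : Ω) :
      ∑ j ∈ range (M ω), a j = ∑' j, {ω | j < M ω}.indicator (fun _ ↦ a j) ω := by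
    rw [tsum_eq_sum (s := range (M ω)) fun j hj ↦ by simp_all]
    exact sum_congr rfl fun j hj ↦ by simp_all
  simp_rw [hsum]
  rw [← integral_tsum_of_summable_integral_norm]
  · simp_rw [integral_indicator_const _ (hs _), smul_eq_mul]
  · exact fun j ↦ (integrable_const _).indicator (hs j)
  · refine .of_nonneg_of_le (fun j ↦ integral_nonneg fun _ ↦ norm_nonneg _) (fun j ↦ ?_)
      (ha.norm.mul_left (μ.real Set.univ))
    simp_rw [norm_indicator_eq_indicator_norm, integral_indicator_const _ (hs j), smul_eq_mul]
    exact mul_le_mul_of_nonneg_right (measureReal_mono (Set.subset_univ _)) (norm_nonneg _)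

theorem tsum_lt_sum_range_add_tsum {c t : ℕ → ℝ} (g : ℕ) (hc : ∀ j, 0 ≤ c j) (ht : Summable t)
    (hle : ∀ j, g ≤ j → c j ≤ t j) (hlt : c g < t g) :
    ∑' j, c j < ∑ j ∈ range g, c j + ∑' k, t (k + g) := by
  have ht' : Summable fun k ↦ t (k + g) := (summable_nat_add_iff g).2 ht
  have htail : ∑' k, c (k + g) < ∑' k, t (k + g) :=
    Summable.tsum_lt_tsum_of_nonneg (i := 0) (fun k ↦ hc _) (fun k ↦ hle _ (by omega))
      (by simpa using hlt) ht'
  have hc' : Summable c :=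
    (summable_nat_add_iff g).1 (.of_nonneg_of_le (fun k ↦ hc _) (fun k ↦ hle _ (by omega)) ht')
  rw [← hc'.sum_add_tsum_nat_add g]
  exact add_lt_add_right htail _

theorem exp_sub_truncExp_eq_tsum (y : ℝ) (g : ℕ) :
    Real.exp y - truncExp g y = ∑' k, y ^ (k + g) / ((k + g).factorial : ℝ) := by
  rw [Real.exp_eq_exp_ℝ, NormedSpace.exp_eq_tsum_div, sub_eq_iff_eq_add', truncExp,
    (Real.summable_pow_div_factorial y).sum_add_tsum_nat_add g]

theorem stmt19_general
    (q g : ℕ) (hq : 2 ≤ q)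
    (Ω : Type*) [MeasurableSpace Ω] (μ : Measure Ω) [IsProbabilityMeasure μ]
    (M : Ω → ℕ) (hMmeas : Measurable M)
    (α : ℝ)
    (htail_low : ∀ j : ℕ, j < g → μ {ω | j < M ω} = 1)
    (htail : ∀ j : ℕ, g ≤ j →
      (μ {ω | j < M ω}).toReal < α * (q : ℝ) ^ (-((j : ℤ) - (g : ℤ))))
    (x : ℝ) (hx : 0 < x) :
    ∫ ω, truncExp (M ω) x ∂μ
      < truncExp g x + α * (q : ℝ) ^ (g : ℕ)
          * (Real.exp (x / q) - truncExp g (x / q)) := by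
  have hq0 : (q : ℝ) ≠ 0 := by exact_mod_cast (by omega : q ≠ 0)
  set t : ℕ → ℝ := fun j ↦ α * (q : ℝ) ^ g * ((x / q) ^ j / (j.factorial : ℝ))
  have hscale (j : ℕ) :
      α * (q : ℝ) ^ (-((j : ℤ) - (g : ℤ))) * (x ^ j / (j.factorial : ℝ)) = t j := by
    rw [neg_sub, zpow_sub₀ hq0, zpow_natCast, zpow_natCast]
    simp only [t, div_pow]
    field_simp
  have hhead : ∑ j ∈ range g, μ.real {ω | j < M ω} * (x ^ j / (j.factorial : ℝ)) = truncExp g x :=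
    sum_congr rfl fun j hj ↦ by simp [measureReal_def, htail_low j (mem_range.1 hj)]
  calc ∫ ω, truncExp (M ω) x ∂μ
      = ∑' j, μ.real {ω | j < M ω} * (x ^ j / (j.factorial : ℝ)) :=
        integral_sum_range_eq_tsum hMmeas (Real.summable_pow_div_factorial x)
    _ < ∑ j ∈ range g, μ.real {ω | j < M ω} * (x ^ j / (j.factorial : ℝ)) + ∑' k, t (k + g) :=
        tsum_lt_sum_range_add_tsum g (fun j ↦ by positivity)
          ((Real.summable_pow_div_factorial _).mul_left _)
          (fun j hj ↦ hscale j ▸ mul_le_mul_of_nonneg_right (htail j hj).le (by positivity))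
          (hscale g ▸ mul_lt_mul_of_pos_right (htail g le_rfl) (by positivity))
    _ = truncExp g x + α * (q : ℝ) ^ g * (Real.exp (x / q) - truncExp g (x / q)) := by
        rw [hhead, tsum_mul_left, exp_sub_truncExp_eq_tsum]

/-- if `M` is the number of i.i.d. uniform vectors in `GF(q)^g`
drawn until `g` linearly independent ones are obtained (so that `P[M > j] = 1`
for `j < g` and `P[M > j] < α_{q,g} q^{-(j-g)}` for `j ≥ g`), then for every
`x > 0`, `E[S_M(x)] < S_g(x) + α_{q,g} q^g (e^{x/q} - S_g(x/q))`, where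
`α_{q,g} = -∑_{k=0}^{g-1} ln(1 - q^{k-g})`. -/
theorem stmt19
    (q g : ℕ) (hq : 2 ≤ q) (hg : 1 ≤ g)
    (Ω : Type*) [MeasurableSpace Ω] (μ : Measure Ω) [IsProbabilityMeasure μ]
    (M : Ω → ℕ) (hMmeas : Measurable M)
    (hMint : Integrable (fun ω => (M ω : ℝ)) μ)
    (α : ℝ) (hα : α = -∑ k ∈ Finset.range g, Real.log (1 - (q : ℝ) ^ ((k : ℤ) - (g : ℤ))))
    (htail_low : ∀ j : ℕ, j < g → μ {ω | j < M ω} = 1)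
    (htail : ∀ j : ℕ, g ≤ j →
      (μ {ω | j < M ω}).toReal < α * (q : ℝ) ^ (-((j : ℤ) - (g : ℤ))))
    (x : ℝ) (hx : 0 < x)
    (hSint : Integrable (fun ω => truncExp (M ω) x) μ) :
    ∫ ω, truncExp (M ω) x ∂μ
      < truncExp g x + α * (q : ℝ) ^ (g : ℕ)
          * (Real.exp (x / q) - truncExp g (x / q)) :=
  stmt19_general q g hq Ω μ M hMmeas α htail_low htail x hx
end
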